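/- arXiv:2304.00304 — 6 statements merged into one kernel-verified Lean document; each statement's English description precedes it below -/
import Mathlib

section
/- Let n ≥ k ≥ r ≥ 0, D ∈ ℝ^{n×k}, and X_⋄ ∈ 𝕆^{n×k} with rank(X_⋄ᵀD) = r. Let X_⋄ᵀD = UΣVᵀ be an SVD with U, V ∈ 𝕆^{k×k} orthogonal and Σ = diag(Σ₁, 0) where Σ₁ ∈ ℝ^{r×r} is diagonal positive definite; write U₁ = U_{(:,1:r)}, U₂ = U_{(:,r+1:k)}, V₁ = V_{(:,1:r)}, V₂ = V_{(:,r+1:k)}. If X ∈ 𝕆^{n×k} satisfies R(X) = R(X_⋄) (equivalently X = X_⋄P for some P ∈ 𝕆^{k×k}) and XᵀD is symmetric positive semidefinite, then there exists W ∈ 𝕆^{(k−r)×(k−r)} such that X = X_⋄U₁V₁ᵀ + X_⋄U₂WV₂ᵀ. -/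
open Matrix

def headCols {m : ℕ} (r : ℕ) (h : r ≤ m) (A : Matrix (Fin m) (Fin m) ℝ) :
    Matrix (Fin m) (Fin r) ℝ :=
  A.submatrix id (Fin.castLE h)

def tailCols {m : ℕ} (r : ℕ) (h : r ≤ m) (A : Matrix (Fin m) (Fin m) ℝ) :
    Matrix (Fin m) (Fin (m - r)) ℝ :=
  A.submatrix id fun j => Fin.cast (Nat.add_sub_cancel' h) (Fin.natAdd r j)

private lemma fin_sum_split {k r : ℕ} (hrk : r ≤ k) (f : Fin k → ℝ) :
    ∑ j, f j = (∑ a : Fin r, f (Fin.castLE hrk a)) +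
      ∑ b : Fin (k - r), f (Fin.cast (Nat.add_sub_cancel' hrk) (Fin.natAdd r b)) := by
  rw [← Equiv.sum_comp (finCongr (Nat.add_sub_cancel' hrk)) f, Fin.sum_univ_add]
  congr 1

/-- If X has orthonormal columns, the same column space as X_⋄, and
XᵀD ⪰ 0, where rank(X_⋄ᵀD) = r and X_⋄ᵀD = UΣVᵀ is an SVD, then
X = X_⋄U₁V₁ᵀ + X_⋄U₂WV₂ᵀ for some orthogonal W ∈ 𝕆^{(k−r)×(k−r)}. -/
theorem basis_matrix_form {n k r : ℕ} (hrk : r ≤ k) (hkn : k ≤ n)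
    (D Xd : Matrix (Fin n) (Fin k) ℝ)
    (hXd : Xdᵀ * Xd = 1) (hrank : (Xdᵀ * D).rank = r)
    (U V : Matrix (Fin k) (Fin k) ℝ) (hU : Uᵀ * U = 1) (hV : Vᵀ * V = 1)
    (sg : Fin r → ℝ) (hpos : ∀ i, 0 < sg i)
    (S : Matrix (Fin k) (Fin k) ℝ)
    (hS : ∀ i j : Fin k,
      S i j = if h : (i : ℕ) = (j : ℕ) ∧ (i : ℕ) < r then sg ⟨i, h.2⟩ else 0)
    (hSVD : Xdᵀ * D = U * S * Vᵀ)
    (X : Matrix (Fin n) (Fin k) ℝ) (hX : Xᵀ * X = 1)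
    (hrange : LinearMap.range X.mulVecLin = LinearMap.range Xd.mulVecLin)
    (hpsd : (Xᵀ * D).PosSemidef) :
    ∃ W : Matrix (Fin (k - r)) (Fin (k - r)) ℝ, Wᵀ * W = 1 ∧
      X = Xd * headCols r hrk U * (headCols r hrk V)ᵀ +
        Xd * tailCols r hrk U * W * (tailCols r hrk V)ᵀ := by
  classical
  -- the diagonal entries
  set d : Fin k → ℝ := fun j => if h : (j : ℕ) < r then sg ⟨j, h⟩ else 0 with hd
  have hdnonneg : ∀ j, 0 ≤ d j := by
    intro j
    by_cases h : (j : ℕ) < r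
    · simp [hd, h, (hpos ⟨j, h⟩).le]
    · simp [hd, h]
  have hSdiag : S = diagonal d := by
    ext i j
    rw [hS]
    rcases eq_or_ne i j with h | h
    · subst h
      simp only [diagonal_apply_eq, hd]
      by_cases hir : (i : ℕ) < r <;> simp [hir]
    · have hij : (i : ℕ) ≠ (j : ℕ) := fun hh => h (Fin.ext hh)
      simp [diagonal_apply_ne _ h, hij]
  have hSpsd : S.PosSemidef := by
    rw [hSdiag]
    exact posSemidef_diagonal_iff.mpr hdnonneg
  have hSsymm : Sᵀ = S := by rw [hSdiag, diagonal_transpose]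
  -- P := Xdᵀ X is orthogonal and X = Xd P
  set P : Matrix (Fin k) (Fin k) ℝ := Xdᵀ * X with hPdef
  have key : ∀ v, (Xd * (Xdᵀ * X)) *ᵥ v = X *ᵥ v := by
    intro v
    obtain ⟨w, hw⟩ : X *ᵥ v ∈ LinearMap.range Xd.mulVecLin := by
      rw [← hrange]; exact ⟨v, rfl⟩
    simp only [mulVecLin_apply] at hw
    have hmid : Xdᵀ *ᵥ (Xd *ᵥ w) = w := by rw [mulVec_mulVec, hXd, one_mulVec]
    calc (Xd * (Xdᵀ * X)) *ᵥ v = Xd *ᵥ ((Xdᵀ * X) *ᵥ v) := by rw [← mulVec_mulVec]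
      _ = Xd *ᵥ (Xdᵀ *ᵥ (X *ᵥ v)) := by rw [← mulVec_mulVec]
      _ = Xd *ᵥ (Xdᵀ *ᵥ (Xd *ᵥ w)) := by rw [hw]
      _ = Xd *ᵥ w := by rw [hmid]
      _ = X *ᵥ v := hw
  have hXP : Xd * P = X := by
    ext i j
    have := congrFun (key (Pi.single j 1)) i
    simpa [mulVec_single] using this
  have hPtP : Pᵀ * P = 1 := by
    have : Pᵀ * P = Xᵀ * (Xd * P) := by
      rw [hPdef, transpose_mul, transpose_transpose, Matrix.mul_assoc]
    rw [this, hXP, hX]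
  have hPPt : P * Pᵀ = 1 := mul_eq_one_comm.mp hPtP
  have hUUt : U * Uᵀ = 1 := mul_eq_one_comm.mp hU
  have hVVt : V * Vᵀ = 1 := mul_eq_one_comm.mp hV
  -- Q := Vᵀ Pᵀ U
  set Q : Matrix (Fin k) (Fin k) ℝ := Vᵀ * Pᵀ * U with hQdef
  have hQt : Qᵀ = Uᵀ * P * V := by
    simp only [hQdef, hPdef, transpose_mul, transpose_transpose, Matrix.mul_assoc]
  have hQtQ : Qᵀ * Q = 1 := by
    rw [hQt, hQdef]
    calc Uᵀ * P * V * (Vᵀ * Pᵀ * U)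
        = Uᵀ * (P * (V * Vᵀ) * Pᵀ) * U := by
          simp only [Matrix.mul_assoc]
      _ = 1 := by rw [hVVt, Matrix.mul_one, hPPt, Matrix.mul_one, hU]
  have hQQt : Q * Qᵀ = 1 := mul_eq_one_comm.mp hQtQ
  -- N := Q S equals Vᵀ (XᵀD) V, is PSD, squares to S², hence N = S.
  have hXtD : Xᵀ * D = Pᵀ * (U * S * Vᵀ) := by
    rw [← hXP, transpose_mul, Matrix.mul_assoc, hSVD]
  have hN : Vᵀ * (Xᵀ * D) * V = Q * S := by
    rw [hXtD, hQdef]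
    calc Vᵀ * (Pᵀ * (U * S * Vᵀ)) * V
        = Vᵀ * Pᵀ * U * S * (Vᵀ * V) := by simp only [Matrix.mul_assoc]
      _ = Vᵀ * Pᵀ * U * S := by rw [hV, Matrix.mul_one]
  have hNpsd : (Q * S).PosSemidef := by
    have h1 := hpsd.conjTranspose_mul_mul_same V
    have h2 : Vᴴ = Vᵀ := by ext i j; simp [conjTranspose_apply]
    rw [h2, hN] at h1
    exact h1
  have hQS : Q * S = S := by
    open scoped MatrixOrder in
    refine (CFC.sq_eq_sq_iff (Q * S) S hNpsd.nonneg hSpsd.nonneg).mp ?_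
    have hherm : (Q * S)ᵀ = Q * S := by
      have := hNpsd.isHermitian
      rw [IsHermitian, conjTranspose] at this
      exact (conjTranspose_eq_transpose_of_trivial (Q * S)).symm.trans hNpsd.isHermitian
    calc (Q * S) ^ 2 = (Q * S)ᵀ * (Q * S) := by rw [hherm, pow_two]
      _ = Sᵀ * (Qᵀ * Q) * S := by
          rw [transpose_mul]; simp only [Matrix.mul_assoc]
      _ = S * S := by rw [hQtQ, Matrix.mul_one, hSsymm]
      _ = S ^ 2 := (pow_two S).symm
  -- entries of Q
  have hQent : ∀ i j : Fin k, (j : ℕ) < r → Q i j = if i = j then 1 else 0 := by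
    intro i j hj
    have hdj : 0 < d j := by simp [hd, hj]; exact hpos _
    have h1 : Q i j * d j = diagonal d i j := by
      have := congrFun (congrFun hQS i) j
      rwa [hSdiag, mul_diagonal] at this
    rcases eq_or_ne i j with h | h
    · subst h
      rw [diagonal_apply_eq] at h1
      have : Q i i * d i = 1 * d i := by rw [one_mul]; exact h1
      simp [mul_right_cancel₀ hdj.ne' this]
    · rw [diagonal_apply_ne _ h] at h1
      have : Q i j = 0 := by
        rcases mul_eq_zero.mp h1 with h2 | h2
        · exact h2
        · exact absurd h2 hdj.ne'
      simp [h, this]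
  have hQrow : ∀ i j : Fin k, (i : ℕ) < r → Q i j = if i = j then 1 else 0 := by
    intro i j hi
    rcases eq_or_ne i j with h | h
    · subst h; exact hQent i i hi
    · simp only [h, if_false]
      have hQii : Q i i = 1 := by simpa using hQent i i hi
      have hrowsum : ∑ l, Q i l * Q i l = 1 := by
        have := congrFun (congrFun hQQt i) i
        simpa [Matrix.mul_apply, one_apply] using this
      have hsum0 : ∑ l ∈ Finset.univ.erase i, Q i l * Q i l = 0 := by
        have hsplit := Finset.add_sum_erase Finset.univ (fun l => Q i l * Q i l)
          (Finset.mem_univ i)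
        simp only [hrowsum, hQii, one_mul] at hsplit
        linarith
      have := (Finset.sum_eq_zero_iff_of_nonneg
        (fun l _ => mul_self_nonneg (Q i l))).mp hsum0 j
        (Finset.mem_erase.mpr ⟨Ne.symm h, Finset.mem_univ j⟩)
      exact mul_self_eq_zero.mp this
  -- the embedding of tail indices
  set emb : Fin (k - r) → Fin k :=
    fun b => Fin.cast (Nat.add_sub_cancel' hrk) (Fin.natAdd r b) with hemb
  have hembval : ∀ b, ((emb b : Fin k) : ℕ) = r + (b : ℕ) := fun b => rfl
  have hembne : ∀ (b : Fin (k - r)) (a : Fin r), emb b ≠ Fin.castLE hrk a := by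
    intro b a hcontra
    have : r + (b : ℕ) = (a : ℕ) := by
      rw [← hembval b, hcontra]; rfl
    omega
  have hembinj : Function.Injective emb := by
    intro a b hab
    have : r + (a : ℕ) = r + (b : ℕ) := by rw [← hembval a, ← hembval b, hab]
    exact Fin.ext (by omega)
  -- define W
  refine ⟨Matrix.of fun a b => Q (emb b) (emb a), ?_, ?_⟩
  · -- WᵀW = 1
    ext a b
    have h1 : ∑ j, Q (emb a) j * Q (emb b) j = (1 : Matrix (Fin k) (Fin k) ℝ) (emb a) (emb b) := by
      have := congrFun (congrFun hQQt (emb a)) (emb b)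
      simpa [Matrix.mul_apply] using this
    rw [fin_sum_split hrk] at h1
    have hz : ∀ a' : Fin r, Q (emb a) (Fin.castLE hrk a') * Q (emb b) (Fin.castLE hrk a') = 0 := by
      intro a'
      rw [hQent (emb a) (Fin.castLE hrk a') (by simpa using a'.isLt)]
      simp [hembne a a']
    rw [Finset.sum_eq_zero (fun a' _ => hz a'), zero_add] at h1
    have h2 : (1 : Matrix (Fin k) (Fin k) ℝ) (emb a) (emb b) =
        (1 : Matrix (Fin (k - r)) (Fin (k - r)) ℝ) a b := by
      rcases eq_or_ne a b with h | h
      · subst h; simp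
      · have hne : emb a ≠ emb b := fun hc => h (hembinj hc)
        simp [Matrix.one_apply, hne, h]
    rw [h2] at h1
    rw [Matrix.mul_apply]
    simpa [transpose_apply] using h1
  · -- the decomposition
    have hPQ : P = U * Qᵀ * Vᵀ := by
      rw [hQt]
      calc P = (U * Uᵀ) * P * (V * Vᵀ) := by rw [hUUt, hVVt, Matrix.one_mul, Matrix.mul_one]
        _ = U * (Uᵀ * P * V) * Vᵀ := by simp only [Matrix.mul_assoc]
    have hmain : U * Qᵀ * Vᵀ = headCols r hrk U * (headCols r hrk V)ᵀ +
        tailCols r hrk U * (Matrix.of fun a b => Q (emb b) (emb a)) * (tailCols r hrk V)ᵀ := by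
      ext p q
      rw [Matrix.add_apply, Matrix.mul_apply]
      have hentry : ∀ j : Fin k, (U * Qᵀ) p j * Vᵀ j q = (∑ i, U p i * Q j i) * V q j := by
        intro j
        rw [Matrix.mul_apply, transpose_apply]
        congr 1
      simp only [hentry]
      rw [fin_sum_split hrk]
      congr 1
      · -- head part
        rw [Matrix.mul_apply]
        refine Finset.sum_congr rfl fun a _ => ?_
        have hcol : ∀ i : Fin k, Q (Fin.castLE hrk a) i = if (Fin.castLE hrk a) = i then 1 else 0 :=
          fun i => hQrow _ i (by simpa using a.isLt)
        simp only [hcol, mul_ite, mul_one, mul_zero]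
        rw [Finset.sum_ite_eq Finset.univ (Fin.castLE hrk a) (fun i => U p i)]
        simp [headCols, transpose_apply, submatrix_apply]
      · -- tail part
        rw [Matrix.mul_apply]
        refine Finset.sum_congr rfl fun b _ => ?_
        have hinner : (∑ i, U p i * Q (emb b) i) = ∑ c, U p (emb c) * Q (emb b) (emb c) := by
          rw [fin_sum_split hrk]
          have hz2 : ∀ a' : Fin r, U p (Fin.castLE hrk a') * Q (emb b) (Fin.castLE hrk a') = 0 := by
            intro a'
            rw [hQent (emb b) (Fin.castLE hrk a') (by simpa using a'.isLt)]
            simp [hembne b a']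
          rw [Finset.sum_eq_zero (fun a' _ => hz2 a'), zero_add]
        rw [hinner, Matrix.mul_apply, transpose_apply]
        simp only [Finset.sum_mul]
        refine Finset.sum_congr rfl fun c _ => ?_
        simp [tailCols, hemb, submatrix_apply]
      -- done inner
    rw [← hXP, hPQ, hmain]
    simp only [Matrix.mul_add, Matrix.mul_assoc]
end

section
/- Let n ≥ k ≥ r ≥ 0, D ∈ ℝ^{n×k}, and X_⋄ ∈ 𝕆^{n×k} with rank(X_⋄ᵀD) = r. Let X_⋄ᵀD = UΣVᵀ be an SVD with U, V ∈ 𝕆^{k×k} orthogonal and Σ = diag(Σ₁, 0) where Σ₁ ∈ ℝ^{r×r} is diagonal positive definite; write U₁ = U_{(:,1:r)}, U₂ = U_{(:,r+1:k)}, V₁ = V_{(:,1:r)}, V₂ = V_{(:,r+1:k)}. Then for every W ∈ 𝕆^{(k−r)×(k−r)}, the matrix X = X_⋄U₁V₁ᵀ + X_⋄U₂WV₂ᵀ satisfies XᵀX = I_k, R(X) = R(X_⋄), and XᵀD is symmetric positive semidefinite. -/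
/-!
With `Q = U · diag(I, W) · Vᵀ` the matrix in question is `X = X⋄ Q`, and `Q` is orthogonal as a
product of orthogonal matrices; hence `XᵀX = I` and `R(X) = R(X⋄)`. Moreover
`XᵀD = Qᵀ X⋄ᵀ D = V · diag(I, Wᵀ) · Σ · Vᵀ = V Σ Vᵀ`, because `Σ = diag(Σ₁, 0)` is not affected by
the lower block `Wᵀ`, and `V Σ Vᵀ ⪰ 0`.
-/

open Matrix

namespace Matrix

variable {l m n o p R : Type*}

section CommSemiring

variable [CommSemiring R]

lemma transpose_mul_mul_self_eq_one [Fintype m] [Fintype n] [DecidableEq n] [DecidableEq p]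
    {A : Matrix m n R} {Q : Matrix n p R} (hA : Aᵀ * A = 1) (hQ : Qᵀ * Q = 1) :
    (A * Q)ᵀ * (A * Q) = 1 := by
  rw [transpose_mul, Matrix.mul_assoc, ← Matrix.mul_assoc Aᵀ, hA, Matrix.one_mul, hQ]

lemma transpose_reindex_mul_reindex [Fintype m] [Fintype n] (e : n ≃ m) (A B : Matrix n n R) :
    (reindex e e A)ᵀ * reindex e e B = reindex e e (Aᵀ * B) := by
  rw [transpose_reindex, reindex_apply, reindex_apply, reindex_apply, submatrix_mul_equiv]

lemma mul_reindex_mul_transpose [Fintype m] [Fintype n] (e : n ≃ m) (A B : Matrix m m R)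
    (F : Matrix n n R) :
    A * reindex e e F * Bᵀ = A.submatrix id e * F * (B.submatrix id e)ᵀ := by
  have hA : A = (A.submatrix id e).submatrix id e.symm := by simp
  have hB : Bᵀ = (B.submatrix id e)ᵀ.submatrix e.symm id := by ext; simp
  rw [reindex_apply, hA, hB, submatrix_mul_equiv, submatrix_mul_equiv]
  simp

lemma transpose_fromBlocks_one_mul [Fintype l] [Fintype o] [DecidableEq l] (W : Matrix o o R)
    (A : Matrix l n R) (B : Matrix l p R) (C : Matrix o n R) (D : Matrix o p R) :
    (fromBlocks (1 : Matrix l l R) 0 0 W)ᵀ * fromBlocks A B C D =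
      fromBlocks A B (Wᵀ * C) (Wᵀ * D) := by
  rw [fromBlocks_transpose, fromBlocks_multiply]
  simp

lemma transpose_mul_eq_of_eq_mul_mul_transpose [Fintype m] [Fintype n] [DecidableEq n]
    {A D : Matrix m n R} {U B S V : Matrix n n R} (hU : Uᵀ * U = 1) (hBS : Bᵀ * S = S)
    (hAD : Aᵀ * D = U * S * Vᵀ) :
    (A * (U * B * Vᵀ))ᵀ * D = V * S * Vᵀ :=
  calc (A * (U * B * Vᵀ))ᵀ * D = V * Bᵀ * (Uᵀ * (Aᵀ * D)) := by
        simp only [transpose_mul, transpose_transpose, Matrix.mul_assoc]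
    _ = V * S * Vᵀ := by
        rw [hAD, ← Matrix.mul_assoc Uᵀ, ← Matrix.mul_assoc Uᵀ, hU, Matrix.one_mul,
          Matrix.mul_assoc V, ← Matrix.mul_assoc Bᵀ, hBS, Matrix.mul_assoc]

end CommSemiring

lemma range_mulVecLin_mul_of_isUnit [CommRing R] [Fintype n] [DecidableEq n] (A : Matrix m n R)
    {Q : Matrix n n R} (hQ : IsUnit Q) :
    LinearMap.range (A * Q).mulVecLin = LinearMap.range A.mulVecLin := by
  rw [mulVecLin_mul]
  exact LinearMap.range_comp_of_range_eq_top _ <|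
    LinearMap.range_eq_top.mpr (mulVec_surjective_iff_isUnit.mpr hQ)

lemma posSemidef_fromBlocks_diagonal_zero [CommRing R] [PartialOrder R] [StarRing R]
    [StarOrderedRing R] [DecidableEq l] [DecidableEq o] {d : l → R} (hd : 0 ≤ d) :
    (fromBlocks (diagonal d) 0 0 0 : Matrix (l ⊕ o) (l ⊕ o) R).PosSemidef := by
  rw [← diagonal_zero, fromBlocks_diagonal, posSemidef_diagonal_iff]
  rintro (i | i)
  exacts [hd i, le_rfl]

end Matrix

def finSumSubEquiv {r k : ℕ} (h : r ≤ k) : Fin r ⊕ Fin (k - r) ≃ Fin k :=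
  finSumFinEquiv.trans (finCongr (Nat.add_sub_cancel' h))

lemma submatrix_finSumSubEquiv {r k : ℕ} (h : r ≤ k) (A : Matrix (Fin k) (Fin k) ℝ) :
    A.submatrix id (finSumSubEquiv h) = fromCols (headCols r h A) (tailCols r h A) := by
  ext i (j | j) <;> rfl

lemma headCols_mul_transpose_add_tailCols_mul_mul_transpose {r k : ℕ} (h : r ≤ k)
    (U V : Matrix (Fin k) (Fin k) ℝ) (W : Matrix (Fin (k - r)) (Fin (k - r)) ℝ) :
    headCols r h U * (headCols r h V)ᵀ + tailCols r h U * W * (tailCols r h V)ᵀ =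
      U * reindex (finSumSubEquiv h) (finSumSubEquiv h) (fromBlocks 1 0 0 W) * Vᵀ := by
  rw [mul_reindex_mul_transpose, submatrix_finSumSubEquiv, submatrix_finSumSubEquiv,
    fromCols_mul_fromBlocks, transpose_fromCols, fromCols_mul_fromRows]
  simp

lemma eq_reindex_fromBlocks_diagonal {r k : ℕ} (h : r ≤ k) (sg : Fin r → ℝ)
    (S : Matrix (Fin k) (Fin k) ℝ)
    (hS : ∀ i j : Fin k,
      S i j = if h : (i : ℕ) = (j : ℕ) ∧ (i : ℕ) < r then sg ⟨i, h.2⟩ else 0) :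
    S = reindex (finSumSubEquiv h) (finSumSubEquiv h) (fromBlocks (diagonal sg) 0 0 0) := by
  rw [← (reindex _ _).symm_apply_eq]
  ext (i | i) (j | j) <;> simp [hS, finSumSubEquiv, diagonal_apply, Fin.ext_iff]
  omega

theorem basis_matrix_form_converse_general {n k r : ℕ} (hrk : r ≤ k)
    (D Xd : Matrix (Fin n) (Fin k) ℝ)
    (hXd : Xdᵀ * Xd = 1)
    (U V : Matrix (Fin k) (Fin k) ℝ) (hU : Uᵀ * U = 1) (hV : Vᵀ * V = 1)
    (sg : Fin r → ℝ) (hpos : ∀ i, 0 < sg i)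
    (S : Matrix (Fin k) (Fin k) ℝ)
    (hS : ∀ i j : Fin k,
      S i j = if h : (i : ℕ) = (j : ℕ) ∧ (i : ℕ) < r then sg ⟨i, h.2⟩ else 0)
    (hSVD : Xdᵀ * D = U * S * Vᵀ) :
    ∀ W : Matrix (Fin (k - r)) (Fin (k - r)) ℝ, Wᵀ * W = 1 →
      (Xd * headCols r hrk U * (headCols r hrk V)ᵀ +
          Xd * tailCols r hrk U * W * (tailCols r hrk V)ᵀ)ᵀ *
        (Xd * headCols r hrk U * (headCols r hrk V)ᵀ +
          Xd * tailCols r hrk U * W * (tailCols r hrk V)ᵀ) = 1 ∧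
      LinearMap.range (Xd * headCols r hrk U * (headCols r hrk V)ᵀ +
          Xd * tailCols r hrk U * W * (tailCols r hrk V)ᵀ).mulVecLin =
        LinearMap.range Xd.mulVecLin ∧
      ((Xd * headCols r hrk U * (headCols r hrk V)ᵀ +
          Xd * tailCols r hrk U * W * (tailCols r hrk V)ᵀ)ᵀ * D).PosSemidef := by
  intro W hW
  set e := finSumSubEquiv hrk
  set B := reindex e e (fromBlocks 1 0 0 W)
  have hX : Xd * headCols r hrk U * (headCols r hrk V)ᵀ +
      Xd * tailCols r hrk U * W * (tailCols r hrk V)ᵀ = Xd * (U * B * Vᵀ) := by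
    rw [← headCols_mul_transpose_add_tailCols_mul_mul_transpose]
    simp only [Matrix.mul_add, Matrix.mul_assoc]
  have hB : Bᵀ * B = 1 := by
    rw [transpose_reindex_mul_reindex, transpose_fromBlocks_one_mul, hW]
    simp
  have hQ : (U * B * Vᵀ)ᵀ * (U * B * Vᵀ) = 1 :=
    transpose_mul_mul_self_eq_one (transpose_mul_mul_self_eq_one hU hB)
      (by rw [transpose_transpose, mul_eq_one_comm.mp hV])
  have hS' : S = reindex e e (fromBlocks (diagonal sg) 0 0 0) :=
    eq_reindex_fromBlocks_diagonal hrk sg S hS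
  have hBS : Bᵀ * S = S := by
    rw [hS', transpose_reindex_mul_reindex, transpose_fromBlocks_one_mul]
    simp
  have hSpsd : S.PosSemidef := by
    rw [hS']
    exact (posSemidef_fromBlocks_diagonal_zero fun i => (hpos i).le).submatrix _
  rw [hX, transpose_mul_eq_of_eq_mul_mul_transpose hU hBS hSVD]
  refine ⟨transpose_mul_mul_self_eq_one hXd hQ,
    range_mulVecLin_mul_of_isUnit Xd (.of_mul_eq_one_right _ hQ), ?_⟩
  simpa [conjTranspose_eq_transpose_of_trivial] using hSpsd.mul_mul_conjTranspose_same V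

/-- With rank(X_⋄ᵀD) = r and SVD X_⋄ᵀD = UΣVᵀ, for every orthogonal
W ∈ 𝕆^{(k−r)×(k−r)} the matrix X = X_⋄U₁V₁ᵀ + X_⋄U₂WV₂ᵀ has orthonormal columns,
the same column space as X_⋄, and XᵀD ⪰ 0. -/
theorem basis_matrix_form_converse {n k r : ℕ} (hrk : r ≤ k) (hkn : k ≤ n)
    (D Xd : Matrix (Fin n) (Fin k) ℝ)
    (hXd : Xdᵀ * Xd = 1) (hrank : (Xdᵀ * D).rank = r)
    (U V : Matrix (Fin k) (Fin k) ℝ) (hU : Uᵀ * U = 1) (hV : Vᵀ * V = 1)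
    (sg : Fin r → ℝ) (hpos : ∀ i, 0 < sg i)
    (S : Matrix (Fin k) (Fin k) ℝ)
    (hS : ∀ i j : Fin k,
      S i j = if h : (i : ℕ) = (j : ℕ) ∧ (i : ℕ) < r then sg ⟨i, h.2⟩ else 0)
    (hSVD : Xdᵀ * D = U * S * Vᵀ) :
    ∀ W : Matrix (Fin (k - r)) (Fin (k - r)) ℝ, Wᵀ * W = 1 →
      (Xd * headCols r hrk U * (headCols r hrk V)ᵀ +
          Xd * tailCols r hrk U * W * (tailCols r hrk V)ᵀ)ᵀ *
        (Xd * headCols r hrk U * (headCols r hrk V)ᵀ +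
          Xd * tailCols r hrk U * W * (tailCols r hrk V)ᵀ) = 1 ∧
      LinearMap.range (Xd * headCols r hrk U * (headCols r hrk V)ᵀ +
          Xd * tailCols r hrk U * W * (tailCols r hrk V)ᵀ).mulVecLin =
        LinearMap.range Xd.mulVecLin ∧
      ((Xd * headCols r hrk U * (headCols r hrk V)ᵀ +
          Xd * tailCols r hrk U * W * (tailCols r hrk V)ᵀ)ᵀ * D).PosSemidef :=
  basis_matrix_form_converse_general hrk D Xd hXd U V hU hV sg hpos S hS hSVD
end

section
/- Let n ≥ k ≥ 1, D ∈ ℝ^{n×k}, and X_⋄ ∈ 𝕆^{n×k} with rank(X_⋄ᵀD) = k. Then there is exactly one matrix X ∈ 𝕆^{n×k} with R(X) = R(X_⋄) and XᵀD symmetric positive semidefinite: namely, if X, X' ∈ 𝕆^{n×k} both satisfy R(X) = R(X_⋄) = R(X') and XᵀD ⪰ 0, X'ᵀD ⪰ 0, then X = X'. Moreover this unique X equals X_⋄UVᵀ, where X_⋄ᵀD = UΣVᵀ is an SVD with U, V ∈ 𝕆^{k×k}. -/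
open Matrix

lemma aux_unique {k : ℕ} (U V Q : Matrix (Fin k) (Fin k) ℝ) (sg : Fin k → ℝ)
    (hU : Uᵀ * U = 1) (hV : Vᵀ * V = 1) (hQ : Qᵀ * Q = 1)
    (hpos : ∀ i, 0 < sg i)
    (hpsd : (Qᵀ * (U * Matrix.diagonal sg * Vᵀ)).PosSemidef) : Q = U * Vᵀ := by
  have hQQ : Q * Qᵀ = 1 := mul_eq_one_comm.mp hQ
  have hVV : V * Vᵀ = 1 := mul_eq_one_comm.mp hV
  set A : Matrix (Fin k) (Fin k) ℝ := U * Matrix.diagonal sg * Vᵀ with hA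
  set S : Matrix (Fin k) (Fin k) ℝ := Qᵀ * A with hS
  have hSsym : Sᵀ = S := by
    have h := hpsd.1
    rwa [Matrix.IsHermitian, conjTranspose_eq_transpose_of_trivial] at h
  have hsg2 : (fun i => sg i * sg i) = fun i => sg i * sg i := rfl
  have hS2 : S * S = V * Matrix.diagonal (fun i => sg i * sg i) * Vᵀ := by
    nth_rewrite 1 [← hSsym]
    rw [hS, transpose_mul, hA]
    simp only [transpose_mul, transpose_transpose, diagonal_transpose, Matrix.mul_assoc]
    rw [← Matrix.mul_assoc Q Qᵀ, hQQ, Matrix.one_mul,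
      ← Matrix.mul_assoc Uᵀ U, hU, Matrix.one_mul,
      ← Matrix.mul_assoc (Matrix.diagonal sg) (Matrix.diagonal sg),
      diagonal_mul_diagonal]
  have hdiagpsd : (Matrix.diagonal sg).PosSemidef :=
    Matrix.posSemidef_diagonal_iff.mpr fun i => (hpos i).le
  have hT : (V * Matrix.diagonal sg * Vᵀ).PosSemidef := by
    have h := hdiagpsd.mul_mul_conjTranspose_same V
    rwa [conjTranspose_eq_transpose_of_trivial] at h
  have hT2 : (V * Matrix.diagonal sg * Vᵀ) * (V * Matrix.diagonal sg * Vᵀ)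
      = V * Matrix.diagonal (fun i => sg i * sg i) * Vᵀ := by
    simp only [Matrix.mul_assoc]
    rw [← Matrix.mul_assoc Vᵀ V, hV, Matrix.one_mul,
      ← Matrix.mul_assoc (Matrix.diagonal sg) (Matrix.diagonal sg),
      diagonal_mul_diagonal]
  have hST : S = V * Matrix.diagonal sg * Vᵀ :=
    open scoped MatrixOrder in
    (CFC.sq_eq_sq_iff S _ hpsd.nonneg hT.nonneg).mp
      (by rw [pow_two, pow_two]; exact hS2.trans hT2.symm)
  have hdiaginv : Matrix.diagonal sg * Matrix.diagonal (fun i => (sg i)⁻¹) = 1 := by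
    rw [diagonal_mul_diagonal]
    have : (fun i => sg i * (sg i)⁻¹) = fun _ => (1 : ℝ) :=
      funext fun i => mul_inv_cancel₀ (hpos i).ne'
    rw [this, Matrix.diagonal_one]
  have hSinv : S * (V * Matrix.diagonal (fun i => (sg i)⁻¹) * Vᵀ) = 1 := by
    rw [hST]
    simp only [Matrix.mul_assoc]
    rw [← Matrix.mul_assoc Vᵀ V, hV, Matrix.one_mul,
      ← Matrix.mul_assoc (Matrix.diagonal sg), hdiaginv, Matrix.one_mul, hVV]
  have hQS : Q * S = A := by
    rw [hS, ← Matrix.mul_assoc, hQQ, Matrix.one_mul]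
  calc Q = Q * (S * (V * Matrix.diagonal (fun i => (sg i)⁻¹) * Vᵀ)) := by
          rw [hSinv, Matrix.mul_one]
    _ = A * (V * Matrix.diagonal (fun i => (sg i)⁻¹) * Vᵀ) := by
          rw [← Matrix.mul_assoc, hQS]
    _ = U * Vᵀ := by
          rw [hA]
          simp only [Matrix.mul_assoc]
          rw [← Matrix.mul_assoc Vᵀ V, hV, Matrix.one_mul,
            ← Matrix.mul_assoc (Matrix.diagonal sg), hdiaginv, Matrix.one_mul]

/-- If rank(X_⋄ᵀD) = k, there is exactly one X with orthonormal columns,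
R(X) = R(X_⋄), and XᵀD ⪰ 0; and this unique X equals X_⋄UVᵀ for any SVD
X_⋄ᵀD = UΣVᵀ. -/
theorem unique_basis_full_rank {n k : ℕ} (hk : 1 ≤ k) (hkn : k ≤ n)
    (D Xd : Matrix (Fin n) (Fin k) ℝ)
    (hXd : Xdᵀ * Xd = 1) (hrank : (Xdᵀ * D).rank = k)
    (U V : Matrix (Fin k) (Fin k) ℝ) (hU : Uᵀ * U = 1) (hV : Vᵀ * V = 1)
    (sg : Fin k → ℝ) (hnonneg : ∀ i, 0 ≤ sg i)
    (hord : ∀ i j : Fin k, i ≤ j → sg j ≤ sg i)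
    (hSVD : Xdᵀ * D = U * Matrix.diagonal sg * Vᵀ) :
    ∀ X X' : Matrix (Fin n) (Fin k) ℝ,
      Xᵀ * X = 1 → X'ᵀ * X' = 1 →
      LinearMap.range X.mulVecLin = LinearMap.range Xd.mulVecLin →
      LinearMap.range X'.mulVecLin = LinearMap.range Xd.mulVecLin →
      (Xᵀ * D).PosSemidef → (X'ᵀ * D).PosSemidef →
      X = X' ∧ X = Xd * U * Vᵀ := by
  -- positivity of singular values
  have hdetU : IsUnit U.det := by
    have h : Uᵀ.det * U.det = 1 := by rw [← det_mul, hU, det_one]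
    rw [det_transpose] at h
    exact IsUnit.of_mul_eq_one _ h
  have hdetV : IsUnit V.det := by
    have h : Vᵀ.det * V.det = 1 := by rw [← det_mul, hV, det_one]
    rw [det_transpose] at h
    exact IsUnit.of_mul_eq_one _ h
  have hrk : (Matrix.diagonal sg).rank = k := by
    rw [hSVD] at hrank
    rwa [Matrix.rank_mul_eq_left_of_isUnit_det _ _ (by rwa [det_transpose]),
      Matrix.rank_mul_eq_right_of_isUnit_det _ _ hdetU] at hrank
  have hpos : ∀ i, 0 < sg i := by
    intro i
    rcases (hnonneg i).lt_or_eq with h | h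
    · exact h
    · exfalso
      rw [Matrix.rank_diagonal] at hrk
      have hlt : Fintype.card {j // sg j ≠ 0} < Fintype.card (Fin k) :=
        Fintype.card_subtype_lt (p := fun j => sg j ≠ 0) (x := i) (by simp [← h])
      rw [hrk, Fintype.card_fin] at hlt
      exact lt_irrefl _ hlt
  -- any admissible X factors as Xd * Q with Q orthogonal
  have factor : ∀ X : Matrix (Fin n) (Fin k) ℝ, Xᵀ * X = 1 →
      LinearMap.range X.mulVecLin = LinearMap.range Xd.mulVecLin →
      (Xdᵀ * X)ᵀ * (Xdᵀ * X) = 1 ∧ X = Xd * (Xdᵀ * X) := by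
    intro X hX hr
    have hcol : ∀ v : Fin k → ℝ, Xd *ᵥ (Xdᵀ *ᵥ (X *ᵥ v)) = X *ᵥ v := by
      intro v
      have hmem : X *ᵥ v ∈ LinearMap.range Xd.mulVecLin := by
        rw [← hr]; exact ⟨v, rfl⟩
      obtain ⟨w, hw⟩ := hmem
      have hw' : Xd *ᵥ w = X *ᵥ v := hw
      rw [← hw']
      simp only [Matrix.mulVec_mulVec]
      rw [hXd, Matrix.mul_one]
    have h2 : (Xd * Xdᵀ) * X = X := by
      ext i j
      have h := hcol (Pi.single j 1)
      simp only [Matrix.mulVec_mulVec, Matrix.mulVec_single_one] at h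
      exact congrFun h i
    have hproj : Xd * (Xdᵀ * X) = X := by rw [← Matrix.mul_assoc]; exact h2
    refine ⟨?_, hproj.symm⟩
    rw [transpose_mul, transpose_transpose, Matrix.mul_assoc, hproj, hX]
  intro X X' hX hX' hr hr' hpsd hpsd'
  obtain ⟨hQ, hXQ⟩ := factor X hX hr
  obtain ⟨hQ', hXQ'⟩ := factor X' hX' hr'
  have key : ∀ (Y : Matrix (Fin n) (Fin k) ℝ), Y = Xd * (Xdᵀ * Y) →
      (Yᵀ * D).PosSemidef → ((Xdᵀ * Y)ᵀ * (Xdᵀ * Y) = 1) → Y = Xd * U * Vᵀ := by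
    intro Y hYQ hYpsd hYQ1
    have hYD : Yᵀ * D = (Xdᵀ * Y)ᵀ * (U * Matrix.diagonal sg * Vᵀ) := by
      conv_lhs => rw [hYQ]
      rw [transpose_mul, Matrix.mul_assoc, hSVD]
    rw [hYD] at hYpsd
    have := aux_unique U V (Xdᵀ * Y) sg hU hV hYQ1 hpos hYpsd
    rw [hYQ, this, ← Matrix.mul_assoc]
  have h1 := key X hXQ hpsd hQ
  have h2 := key X' hXQ' hpsd' hQ'
  exact ⟨h1.trans h2.symm, h1⟩
end

section
/- Let n ≥ k ≥ 1, D ∈ ℝ^{n×k}, and X, X̃ ∈ 𝕆^{n×k} be such that XᵀD and X̃ᵀD are both symmetric positive definite. Suppose σ, σ̃ > 0 are such that XᵀD − σI_k ⪰ 0 and X̃ᵀD − σ̃I_k ⪰ 0 (e.g., σ = σ_k(XᵀD), σ̃ = σ_k(X̃ᵀD)). Then ‖X − X̃‖_F ≤ √2 · (1 + 2‖D‖₂/(σ + σ̃)) · √(k − ‖XᵀX̃‖_F²), where √(k − ‖XᵀX̃‖_F²) = ‖sin Θ(R(X), R(X̃))‖_F. -/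
open Matrix

noncomputable def frobNorm {m n : ℕ} (A : Matrix (Fin m) (Fin n) ℝ) : ℝ :=
  Real.sqrt ((Aᵀ * A).trace)

noncomputable def specNorm {m n : ℕ} (A : Matrix (Fin m) (Fin n) ℝ) : ℝ :=
  ‖(Matrix.toEuclideanLin A).toContinuousLinearMap‖

lemma trace_transpose_mul_eq {m n : ℕ} (A B : Matrix (Fin m) (Fin n) ℝ) :
    (Aᵀ * B).trace = ∑ j, ∑ i, A i j * B i j := by
  simp [Matrix.trace, Matrix.diag, Matrix.mul_apply]

lemma trace_transpose_mul_self_nonneg {m n : ℕ} (A : Matrix (Fin m) (Fin n) ℝ) :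
    0 ≤ (Aᵀ * A).trace := by
  rw [trace_transpose_mul_eq]
  exact Finset.sum_nonneg fun j _ => Finset.sum_nonneg fun i _ => mul_self_nonneg _

lemma trace_CS {m n : ℕ} (A B : Matrix (Fin m) (Fin n) ℝ) :
    (Aᵀ * B).trace ≤ Real.sqrt ((Aᵀ * A).trace) * Real.sqrt ((Bᵀ * B).trace) := by
  have h := Finset.sum_mul_sq_le_sq_mul_sq (Finset.univ : Finset (Fin m × Fin n))
    (fun p => A p.1 p.2) (fun p => B p.1 p.2)
  rw [trace_transpose_mul_eq, trace_transpose_mul_eq, trace_transpose_mul_eq]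
  have e : ∀ C : Matrix (Fin m) (Fin n) ℝ, ∀ Cc : Matrix (Fin m) (Fin n) ℝ,
      (∑ j, ∑ i, C i j * Cc i j) = ∑ p : Fin m × Fin n, C p.1 p.2 * Cc p.1 p.2 := by
    intro C Cc
    rw [Fintype.sum_prod_type, Finset.sum_comm]
  rw [e A B, e A A, e B B]
  calc (∑ p : Fin m × Fin n, A p.1 p.2 * B p.1 p.2)
      ≤ |∑ p : Fin m × Fin n, A p.1 p.2 * B p.1 p.2| := le_abs_self _
    _ = Real.sqrt ((∑ p : Fin m × Fin n, A p.1 p.2 * B p.1 p.2) ^ 2) :=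
        (Real.sqrt_sq_eq_abs _).symm
    _ ≤ Real.sqrt ((∑ p : Fin m × Fin n, A p.1 p.2 ^ 2) * ∑ p : Fin m × Fin n, B p.1 p.2 ^ 2) :=
        Real.sqrt_le_sqrt h
    _ = _ := by
        rw [Real.sqrt_mul (Finset.sum_nonneg fun p _ => sq_nonneg _)]
        simp [sq]

lemma psd_trace_nonneg {m : ℕ} {P : Matrix (Fin m) (Fin m) ℝ} (hP : P.PosSemidef) :
    0 ≤ P.trace := by
  rw [Matrix.trace]
  refine Finset.sum_nonneg fun i _ => ?_
  have h := hP.diag_nonneg (i := i)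
  simpa [dotProduct, Matrix.mulVec, Pi.single_apply, Finset.mul_sum] using h

lemma mulVec_sq_sum_le {n k : ℕ} (D : Matrix (Fin n) (Fin k) ℝ) (v : Fin k → ℝ) :
    ∑ i, (D *ᵥ v) i * (D *ᵥ v) i ≤ specNorm D ^ 2 * ∑ j, v j * v j := by
  have h := (Matrix.toEuclideanLin D).toContinuousLinearMap.le_opNorm
    ((WithLp.equiv 2 (Fin k → ℝ)).symm v)
  have e1 : (Matrix.toEuclideanLin D).toContinuousLinearMap ((WithLp.equiv 2 (Fin k → ℝ)).symm v)
      = (WithLp.equiv 2 (Fin n → ℝ)).symm (D *ᵥ v) := rfl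
  rw [e1] at h
  have hn : ∀ {m : ℕ} (w : Fin m → ℝ),
      ‖(WithLp.equiv 2 (Fin m → ℝ)).symm w‖ = Real.sqrt (∑ i, w i * w i) := by
    intro m w
    rw [EuclideanSpace.norm_eq]
    congr 1
    refine Finset.sum_congr rfl fun i _ => ?_
    simp [Real.norm_eq_abs, sq, abs_mul_abs_self]
  rw [hn, hn] at h
  have h0 : 0 ≤ ∑ i, (D *ᵥ v) i * (D *ᵥ v) i :=
    Finset.sum_nonneg fun i _ => mul_self_nonneg _
  have h0' : 0 ≤ ∑ j, v j * v j := Finset.sum_nonneg fun j _ => mul_self_nonneg _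
  calc ∑ i, (D *ᵥ v) i * (D *ᵥ v) i
      = Real.sqrt (∑ i, (D *ᵥ v) i * (D *ᵥ v) i) ^ 2 := (Real.sq_sqrt h0).symm
    _ ≤ (specNorm D * Real.sqrt (∑ j, v j * v j)) ^ 2 := by
        apply pow_le_pow_left₀ (Real.sqrt_nonneg _) h
    _ = specNorm D ^ 2 * ∑ j, v j * v j := by
        rw [mul_pow, Real.sq_sqrt h0']

/-- If XᵀD, X̃ᵀD are symmetric positive definite with
XᵀD ⪰ σI, X̃ᵀD ⪰ σ̃I (σ, σ̃ > 0), then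
‖X − X̃‖_F ≤ √2·(1 + 2‖D‖₂/(σ + σ̃))·√(k − ‖XᵀX̃‖_F²). -/
theorem full_rank_frob_bound {n k : ℕ} (hk : 1 ≤ k) (hkn : k ≤ n)
    (D X Xt : Matrix (Fin n) (Fin k) ℝ)
    (hX : Xᵀ * X = 1) (hXt : Xtᵀ * Xt = 1)
    (hpd : (Xᵀ * D).PosDef) (hpdt : (Xtᵀ * D).PosDef)
    (sg sgt : ℝ) (hsg : 0 < sg) (hsgt : 0 < sgt)
    (h1 : (Xᵀ * D - sg • (1 : Matrix (Fin k) (Fin k) ℝ)).PosSemidef)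
    (h2 : (Xtᵀ * D - sgt • (1 : Matrix (Fin k) (Fin k) ℝ)).PosSemidef) :
    frobNorm (X - Xt) ≤ Real.sqrt 2 * (1 + 2 * specNorm D / (sg + sgt)) *
      Real.sqrt ((k : ℝ) - frobNorm (Xᵀ * Xt) ^ 2) := by
  -- abbreviations
  set S : Matrix (Fin k) (Fin k) ℝ := Xᵀ * Xt with hS
  set A : Matrix (Fin k) (Fin k) ℝ := Xᵀ * D with hA
  set B : Matrix (Fin k) (Fin k) ℝ := Xtᵀ * D with hB
  set Δ : Matrix (Fin n) (Fin k) ℝ := X - Xt with hΔdef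
  set MM : Matrix (Fin n) (Fin n) ℝ := X * Xᵀ - Xt * Xtᵀ with hMMdef
  have hXr : ∀ {p : ℕ} (W : Matrix (Fin k) (Fin p) ℝ), Xᵀ * (X * W) = W := by
    intro p W; rw [← Matrix.mul_assoc, hX, Matrix.one_mul]
  have hXtr : ∀ {p : ℕ} (W : Matrix (Fin k) (Fin p) ℝ), Xtᵀ * (Xt * W) = W := by
    intro p W; rw [← Matrix.mul_assoc, hXt, Matrix.one_mul]
  have hAsym : Aᵀ = A := by
    rw [← Matrix.conjTranspose_eq_transpose_of_trivial]; exact hpd.1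
  have hBsym : Bᵀ = B := by
    rw [← Matrix.conjTranspose_eq_transpose_of_trivial]; exact hpdt.1
  have hSt : Sᵀ = Xtᵀ * X := by
    rw [hS, Matrix.transpose_mul, Matrix.transpose_transpose]
  -- matrix identity 1 : Δᵀ Δ
  have I1 : Δᵀ * Δ = (1 + 1) - (S + Sᵀ) := by
    rw [hΔdef, Matrix.transpose_sub, Matrix.sub_mul, Matrix.mul_sub, Matrix.mul_sub,
      hX, hXt, hSt, ← hS]
    abel
  -- matrix identity 2 : Δᵀ (MM D)
  have I2 : Δᵀ * (MM * D) = (A + B) - (S * B + Sᵀ * A) := by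
    rw [hΔdef, hMMdef, Matrix.transpose_sub, Matrix.sub_mul, Matrix.sub_mul, Matrix.mul_sub,
      Matrix.mul_sub]
    rw [Matrix.mul_assoc X Xᵀ D, Matrix.mul_assoc Xt Xtᵀ D, ← hA, ← hB]
    rw [hXr, hXtr, show Xᵀ * (Xt * B) = S * B by rw [← Matrix.mul_assoc, ← hS],
      show Xtᵀ * (X * A) = Sᵀ * A by rw [← Matrix.mul_assoc, ← hSt]]
    abel
  -- trace identity
  have htrace : ((Δᵀ * Δ) * (A + B)).trace = 2 * (Δᵀ * (MM * D)).trace := by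
    have hSA : (S * A).trace = (Sᵀ * A).trace := by
      rw [← Matrix.trace_transpose (S * A), Matrix.transpose_mul, hAsym,
        Matrix.trace_mul_comm]
    have hSB : (Sᵀ * B).trace = (S * B).trace := by
      rw [← Matrix.trace_transpose (Sᵀ * B), Matrix.transpose_mul, hBsym,
        Matrix.transpose_transpose, Matrix.trace_mul_comm]
    rw [I1, I2]
    simp only [Matrix.sub_mul, Matrix.add_mul, Matrix.mul_add, Matrix.one_mul,
      Matrix.trace_sub, Matrix.trace_add]
    rw [hSA, hSB]
    ring
  -- PSD step
  have hN : ((A - sg • (1 : Matrix (Fin k) (Fin k) ℝ))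
      + (B - sgt • (1 : Matrix (Fin k) (Fin k) ℝ))).PosSemidef := h1.add h2
  have hPSD := hN.mul_mul_conjTranspose_same Δ
  have hpsdtr : 0 ≤ (Δ * ((A - sg • 1) + (B - sgt • 1)) * Δᴴ).trace := psd_trace_nonneg hPSD
  have hΔH : (Δᴴ : Matrix (Fin k) (Fin n) ℝ) = Δᵀ := Matrix.conjTranspose_eq_transpose_of_trivial Δ
  have step1 : (sg + sgt) * (Δᵀ * Δ).trace ≤ ((Δᵀ * Δ) * (A + B)).trace := by
    have e1 : (Δ * ((A - sg • 1) + (B - sgt • 1)) * Δᴴ).trace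
        = ((Δᵀ * Δ) * (A + B)).trace - (sg + sgt) * (Δᵀ * Δ).trace := by
      rw [hΔH]
      have : (A - sg • 1) + (B - sgt • 1) = (A + B) - (sg + sgt) • (1 : Matrix (Fin k) (Fin k) ℝ) := by
        rw [add_smul]; abel
      rw [this, Matrix.mul_assoc,
        Matrix.trace_mul_comm Δ ((A + B - (sg + sgt) • 1) * Δᵀ), Matrix.mul_assoc,
        Matrix.trace_mul_comm (A + B - (sg + sgt) • 1) (Δᵀ * Δ)]
      rw [Matrix.mul_sub, Matrix.trace_sub, Matrix.mul_smul, Matrix.mul_one, Matrix.trace_smul]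
      simp [smul_eq_mul]
    linarith [hpsdtr, e1 ▸ hpsdtr]
  -- Cauchy-Schwarz step
  have hMMsym : MMᵀ = MM := by
    rw [hMMdef, Matrix.transpose_sub, Matrix.transpose_mul, Matrix.transpose_mul,
      Matrix.transpose_transpose, Matrix.transpose_transpose]
  have step2 : (Δᵀ * (MM * D)).trace ≤
      Real.sqrt ((MMᵀ * MM).trace) * Real.sqrt (((D * Δᵀ)ᵀ * (D * Δᵀ)).trace) := by
    have e2 : (Δᵀ * (MM * D)).trace = (MMᵀ * (D * Δᵀ)).trace := by
      rw [hMMsym, Matrix.trace_mul_comm, Matrix.mul_assoc]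
    rw [e2]
    exact trace_CS MM (D * Δᵀ)
  -- bound on trace (MMᵀ MM)
  have hMM2 : (MMᵀ * MM).trace = 2 * ((k : ℝ) - (Sᵀ * S).trace) := by
    rw [hMMsym]
    rw [hMMdef, Matrix.sub_mul, Matrix.mul_sub, Matrix.mul_sub, Matrix.trace_sub,
      Matrix.trace_sub, Matrix.trace_sub]
    have t1 : (X * Xᵀ * (X * Xᵀ)).trace = (k : ℝ) := by
      rw [Matrix.mul_assoc, hXr, Matrix.trace_mul_comm, hX, Matrix.trace_one]
      simp
    have t4 : (Xt * Xtᵀ * (Xt * Xtᵀ)).trace = (k : ℝ) := by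
      rw [Matrix.mul_assoc, hXtr, Matrix.trace_mul_comm, hXt, Matrix.trace_one]
      simp
    have t2 : (X * Xᵀ * (Xt * Xtᵀ)).trace = (Sᵀ * S).trace := by
      rw [Matrix.mul_assoc, Matrix.trace_mul_comm, ← Matrix.mul_assoc Xᵀ Xt Xtᵀ, ← hS,
        Matrix.mul_assoc S Xtᵀ X, ← hSt, Matrix.trace_mul_comm]
    have t3 : (Xt * Xtᵀ * (X * Xᵀ)).trace = (Sᵀ * S).trace := by
      rw [Matrix.mul_assoc, Matrix.trace_mul_comm, ← Matrix.mul_assoc Xtᵀ X Xᵀ, ← hSt,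
        Matrix.mul_assoc Sᵀ Xᵀ Xt, ← hS]
    rw [t1, t2, t3, t4]
    ring
  -- bound on trace ((DΔᵀ)ᵀ (DΔᵀ))
  have step3 : ((D * Δᵀ)ᵀ * (D * Δᵀ)).trace ≤ specNorm D ^ 2 * (Δᵀ * Δ).trace := by
    rw [trace_transpose_mul_eq, trace_transpose_mul_eq]
    have e3 : ∀ j i, (D * Δᵀ) i j = (D *ᵥ (fun l => Δ j l)) i := by
      intro j i
      simp [Matrix.mul_apply, Matrix.mulVec, dotProduct, Matrix.transpose_apply]
    calc ∑ j, ∑ i, (D * Δᵀ) i j * (D * Δᵀ) i j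
        = ∑ j : Fin n, ∑ i, (D *ᵥ (fun l => Δ j l)) i * (D *ᵥ (fun l => Δ j l)) i := by
          refine Finset.sum_congr rfl fun j _ => Finset.sum_congr rfl fun i _ => ?_
          rw [e3]
      _ ≤ ∑ j : Fin n, specNorm D ^ 2 * ∑ l, Δ j l * Δ j l := by
          refine Finset.sum_le_sum fun j _ => mulVec_sq_sum_le D _
      _ = specNorm D ^ 2 * (Δᵀ * Δ).trace := by
          rw [← Finset.mul_sum, trace_transpose_mul_eq, Finset.sum_comm]
  -- numeric endgame
  have ha : 0 ≤ (Δᵀ * Δ).trace := trace_transpose_mul_self_nonneg Δ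
  have hb : 0 ≤ (Sᵀ * S).trace := trace_transpose_mul_self_nonneg S
  have hs2 : 0 ≤ (k : ℝ) - (Sᵀ * S).trace := by
    have h0 := trace_transpose_mul_self_nonneg MM
    rw [hMM2] at h0; linarith
  have hc : 0 ≤ specNorm D := norm_nonneg _
  have hss : 0 < sg + sgt := by linarith
  have hfrobS : frobNorm S ^ 2 = (Sᵀ * S).trace := Real.sq_sqrt hb
  show Real.sqrt ((Δᵀ * Δ).trace) ≤ _
  rw [hfrobS]
  have key : (sg + sgt) * (Δᵀ * Δ).trace ≤
      2 * ((Real.sqrt 2 * Real.sqrt ((k : ℝ) - (Sᵀ * S).trace)) *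
        (specNorm D * Real.sqrt ((Δᵀ * Δ).trace))) := by
    have k1 : Real.sqrt ((MMᵀ * MM).trace)
        = Real.sqrt 2 * Real.sqrt ((k : ℝ) - (Sᵀ * S).trace) := by
      rw [hMM2, Real.sqrt_mul (by norm_num : (0:ℝ) ≤ 2)]
    have k2 : Real.sqrt (((D * Δᵀ)ᵀ * (D * Δᵀ)).trace)
        ≤ specNorm D * Real.sqrt ((Δᵀ * Δ).trace) := by
      calc Real.sqrt (((D * Δᵀ)ᵀ * (D * Δᵀ)).trace)
          ≤ Real.sqrt (specNorm D ^ 2 * (Δᵀ * Δ).trace) := Real.sqrt_le_sqrt step3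
        _ = specNorm D * Real.sqrt ((Δᵀ * Δ).trace) := by
            rw [Real.sqrt_mul (sq_nonneg _), Real.sqrt_sq hc]
    calc (sg + sgt) * (Δᵀ * Δ).trace ≤ (Δᵀ * Δ * (A + B)).trace := step1
      _ = 2 * (Δᵀ * (MM * D)).trace := htrace
      _ ≤ 2 * (Real.sqrt ((MMᵀ * MM).trace) * Real.sqrt (((D * Δᵀ)ᵀ * (D * Δᵀ)).trace)) := by
          linarith [step2]
      _ ≤ _ := by
          rw [← k1]
          gcongr
  rcases eq_or_lt_of_le ha with h0 | hapos
  · rw [← h0, Real.sqrt_zero]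
    have : 0 ≤ 2 * specNorm D / (sg + sgt) := by positivity
    have h2' : 0 ≤ (1 + 2 * specNorm D / (sg + sgt)) := by linarith
    positivity
  · have hsq : 0 < Real.sqrt ((Δᵀ * Δ).trace) := Real.sqrt_pos.mpr hapos
    set a' := Real.sqrt ((Δᵀ * Δ).trace) with ha'
    set u := Real.sqrt ((k : ℝ) - (Sᵀ * S).trace) with hu
    have hu0 : 0 ≤ u := Real.sqrt_nonneg _
    have key2 : (sg + sgt) * a' ≤ 2 * (Real.sqrt 2 * u * specNorm D) := by
      apply le_of_mul_le_mul_right _ hsq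
      calc (sg + sgt) * a' * a' = (sg + sgt) * (Δᵀ * Δ).trace := by
            rw [mul_assoc, ha', Real.mul_self_sqrt ha]
        _ ≤ 2 * ((Real.sqrt 2 * u) * (specNorm D * a')) := key
        _ = 2 * (Real.sqrt 2 * u * specNorm D) * a' := by ring
    have hdiv : a' ≤ 2 * (Real.sqrt 2 * u * specNorm D) / (sg + sgt) := by
      rw [le_div_iff₀ hss]; linarith
    have expand : Real.sqrt 2 * (1 + 2 * specNorm D / (sg + sgt)) * u
        = Real.sqrt 2 * u + 2 * (Real.sqrt 2 * u * specNorm D) / (sg + sgt) := by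
      field_simp
    have h20 : 0 ≤ Real.sqrt 2 * u := mul_nonneg (Real.sqrt_nonneg 2) hu0
    linarith
end

section
/- Let n ≥ k ≥ 1, D ∈ ℝ^{n×k}, and X, X̃ ∈ 𝕆^{n×k} be such that XᵀD and X̃ᵀD are both symmetric positive definite, and suppose σ, σ̃ > 0 satisfy XᵀD − σI_k ⪰ 0 and X̃ᵀD − σ̃I_k ⪰ 0. Let X_⊥ ∈ ℝ^{n×(n−k)} satisfy X_⊥ᵀX_⊥ = I_{n−k} and XᵀX_⊥ = 0. Then ‖X − X̃‖₂ ≤ √2 · (1 + 2‖D‖₂/(σ + σ̃)) · ‖X_⊥ᵀX̃‖₂, where ‖X_⊥ᵀX̃‖₂ = ‖sin Θ(R(X), R(X̃))‖₂. -/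
open Matrix
open scoped Matrix.Norms.L2Operator
set_option maxHeartbeats 1000000

lemma specNorm_eq {m n : ℕ} (A : Matrix (Fin m) (Fin n) ℝ) : specNorm A = ‖A‖ := rfl

noncomputable def ev {m : ℕ} (v : Fin m → ℝ) : EuclideanSpace ℝ (Fin m) :=
  (WithLp.equiv 2 _).symm v

lemma norm_ev_sq {m : ℕ} (v : Fin m → ℝ) : ‖ev v‖ ^ 2 = v ⬝ᵥ v := by
  rw [← real_inner_self_eq_norm_sq, ev, PiLp.inner_apply]
  simp [dotProduct, sq]

lemma norm_mulVec_le {m n : ℕ} (A : Matrix (Fin m) (Fin n) ℝ) (v : Fin n → ℝ) :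
    ‖ev (A *ᵥ v)‖ ≤ ‖A‖ * ‖ev v‖ := A.l2_opNorm_mulVec (ev v)

lemma dot_mulVec_le {m n : ℕ} (A : Matrix (Fin m) (Fin n) ℝ) (u : Fin m → ℝ) (v : Fin n → ℝ) :
    u ⬝ᵥ (A *ᵥ v) ≤ ‖A‖ * ‖ev u‖ * ‖ev v‖ := by
  have h1 : u ⬝ᵥ (A *ᵥ v) = inner ℝ (ev u) (ev (A *ᵥ v)) := by
    simp [ev, PiLp.inner_apply, dotProduct, RCLike.inner_apply, mul_comm]
  rw [h1, mul_assoc]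
  calc inner ℝ (ev u) (ev (A *ᵥ v)) ≤ ‖ev u‖ * ‖ev (A *ᵥ v)‖ := real_inner_le_norm _ _
    _ ≤ ‖ev u‖ * (‖A‖ * ‖ev v‖) := by
        refine mul_le_mul_of_nonneg_left (norm_mulVec_le A v) (norm_nonneg _)
    _ = ‖A‖ * (‖ev u‖ * ‖ev v‖) := by ring

lemma specNorm_le_bound {m n : ℕ} (A : Matrix (Fin m) (Fin n) ℝ) (c : ℝ) (hc : 0 ≤ c)
    (h : ∀ v : Fin n → ℝ, ‖ev (A *ᵥ v)‖ ≤ c * ‖ev v‖) : ‖A‖ ≤ c := by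
  rw [l2_opNorm_def]
  refine ContinuousLinearMap.opNorm_le_bound _ hc fun x => ?_
  simpa [Matrix.toEuclideanLin_apply, ev] using h ((WithLp.equiv 2 _) x)

lemma transpose_eq_conjTranspose {m n : ℕ} (A : Matrix (Fin m) (Fin n) ℝ) : Aᵀ = Aᴴ := by
  ext i j; simp [Matrix.conjTranspose_apply]

lemma l2norm_transpose {m n : ℕ} (A : Matrix (Fin m) (Fin n) ℝ) : ‖Aᵀ‖ = ‖A‖ := by
  rw [transpose_eq_conjTranspose, Matrix.l2_opNorm_conjTranspose]

lemma l2norm_transpose_mul_self {m n : ℕ} (A : Matrix (Fin m) (Fin n) ℝ) :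
    ‖Aᵀ * A‖ = ‖A‖ ^ 2 := by
  rw [transpose_eq_conjTranspose, Matrix.l2_opNorm_conjTranspose_mul_self, sq]

lemma ev_zero_iff {m : ℕ} (v : Fin m → ℝ) : ev v = 0 ↔ v = 0 := by
  constructor
  · intro h; have := congrArg (WithLp.equiv 2 (Fin m → ℝ)) h; simpa [ev] using this
  · rintro rfl; rfl

lemma ev_smul {m : ℕ} (c : ℝ) (v : Fin m → ℝ) : ev (c • v) = c • ev v := rfl

lemma matrix_mem_spectrum_iff {k : ℕ} (A : Matrix (Fin k) (Fin k) ℝ) (μ : ℝ) :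
    μ ∈ spectrum ℝ A ↔ ∃ v, v ≠ 0 ∧ A *ᵥ v = μ • v := by
  rw [spectrum.mem_iff, Matrix.isUnit_iff_isUnit_det, isUnit_iff_ne_zero, not_not,
    ← Matrix.exists_mulVec_eq_zero_iff]
  have halg : (algebraMap ℝ (Matrix (Fin k) (Fin k) ℝ)) μ = μ • (1 : Matrix (Fin k) (Fin k) ℝ) := by
    simp [Algebra.algebraMap_eq_smul_one]
  constructor
  · rintro ⟨v, hv, h⟩
    refine ⟨v, hv, ?_⟩
    rw [halg, Matrix.sub_mulVec, Matrix.smul_mulVec, Matrix.one_mulVec, sub_eq_zero] at h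
    exact h.symm
  · rintro ⟨v, hv, h⟩
    refine ⟨v, hv, ?_⟩
    rw [halg, Matrix.sub_mulVec, Matrix.smul_mulVec, Matrix.one_mulVec, sub_eq_zero, h]

lemma abs_le_norm_of_mem_spectrum {k : ℕ} {A : Matrix (Fin k) (Fin k) ℝ} {μ : ℝ}
    (h : μ ∈ spectrum ℝ A) : |μ| ≤ ‖A‖ := by
  obtain ⟨v, hv, hAv⟩ := (matrix_mem_spectrum_iff A μ).1 h
  have h1 : ‖ev (A *ᵥ v)‖ = |μ| * ‖ev v‖ := by
    rw [hAv, ev_smul, norm_smul, Real.norm_eq_abs]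
  have h2 := norm_mulVec_le A v
  rw [h1] at h2
  have hvpos : 0 < ‖ev v‖ := by
    rw [norm_pos_iff]
    exact fun hc => hv ((ev_zero_iff v).1 hc)
  exact le_of_mul_le_mul_right h2 hvpos

lemma eunorm_sq {m : ℕ} (w : EuclideanSpace ℝ (Fin m)) : ‖w‖ ^ 2 = ∑ i, (w i) ^ 2 := by
  rw [EuclideanSpace.norm_eq, Real.sq_sqrt (by positivity)]
  simp [Real.norm_eq_abs, sq_abs]

lemma norm_diagonal_le {k : ℕ} (f : Fin k → ℝ) (t : ℝ) (ht : 0 ≤ t)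
    (h : ∀ i, |f i| ≤ t) : ‖Matrix.diagonal f‖ ≤ t := by
  refine specNorm_le_bound _ t ht fun v => ?_
  have h2 : ‖ev (Matrix.diagonal f *ᵥ v)‖ ^ 2 ≤ (t * ‖ev v‖) ^ 2 := by
    rw [eunorm_sq, mul_pow, eunorm_sq]
    rw [Finset.mul_sum]
    refine Finset.sum_le_sum fun i _ => ?_
    have : ev (Matrix.diagonal f *ᵥ v) i = f i * v i := by
      simp [ev, Matrix.mulVec_diagonal, PiLp.toLp_apply]
    rw [this]
    have hvi : ev v i = v i := rfl
    rw [hvi, mul_pow]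
    have := h i
    have hf2 : f i ^ 2 ≤ t ^ 2 := by
      rw [← sq_abs (f i)]
      exact pow_le_pow_left₀ (abs_nonneg _) this 2
    nlinarith [sq_nonneg (v i)]
  exact le_of_pow_le_pow_left₀ two_ne_zero (by positivity) h2

lemma norm_unitary {k : ℕ} (U : Matrix (Fin k) (Fin k) ℝ) (hk : 0 < k)
    (hU : Uᴴ * U = 1) : ‖U‖ = 1 := by
  haveI : Nonempty (Fin k) := ⟨⟨0, hk⟩⟩
  have h1 : ‖Uᴴ * U‖ = ‖U‖ * ‖U‖ := Matrix.l2_opNorm_conjTranspose_mul_self U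
  rw [hU] at h1
  have hone : ‖(1 : Matrix (Fin k) (Fin k) ℝ)‖ = 1 := norm_one
  rw [hone] at h1
  nlinarith [norm_nonneg U]

lemma exists_abs_eigen_eq_norm {k : ℕ} (hk : 0 < k) {A : Matrix (Fin k) (Fin k) ℝ}
    (hA : A.IsHermitian) : ∃ μ ∈ spectrum ℝ A, |μ| = ‖A‖ := by
  haveI : Nonempty (Fin k) := ⟨⟨0, hk⟩⟩
  obtain ⟨i₀, -, hmax⟩ := Finset.exists_max_image Finset.univ (fun i => |hA.eigenvalues i|)
    ⟨Classical.arbitrary _, Finset.mem_univ _⟩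
  refine ⟨hA.eigenvalues i₀, hA.eigenvalues_mem_spectrum_real i₀, le_antisymm ?_ ?_⟩
  · exact abs_le_norm_of_mem_spectrum (hA.eigenvalues_mem_spectrum_real i₀)
  · -- ‖A‖ ≤ |eigenvalues i₀|
    have hspec := hA.spectral_theorem
    have hdiag : Matrix.diagonal (RCLike.ofReal ∘ hA.eigenvalues) =
        Matrix.diagonal hA.eigenvalues := by
      congr 1
    have hU : (star (hA.eigenvectorUnitary : Matrix (Fin k) (Fin k) ℝ)) *
        (hA.eigenvectorUnitary : Matrix (Fin k) (Fin k) ℝ) = 1 :=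
      Unitary.star_mul_self_of_mem (hA.eigenvectorUnitary).2
    have hnU : ‖(hA.eigenvectorUnitary : Matrix (Fin k) (Fin k) ℝ)‖ = 1 :=
      norm_unitary _ hk hU
    have hnUs : ‖(star (hA.eigenvectorUnitary : Matrix (Fin k) (Fin k) ℝ))‖ = 1 := by
      have : star (hA.eigenvectorUnitary : Matrix (Fin k) (Fin k) ℝ) =
          (hA.eigenvectorUnitary : Matrix (Fin k) (Fin k) ℝ)ᴴ := rfl
      rw [this, Matrix.l2_opNorm_conjTranspose, hnU]
    have hd : ‖Matrix.diagonal hA.eigenvalues‖ ≤ |hA.eigenvalues i₀| :=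
      norm_diagonal_le _ _ (abs_nonneg _) fun i => hmax i (Finset.mem_univ i)
    calc ‖A‖ = ‖(hA.eigenvectorUnitary : Matrix (Fin k) (Fin k) ℝ) *
          Matrix.diagonal (RCLike.ofReal ∘ hA.eigenvalues) *
          (star (hA.eigenvectorUnitary : Matrix (Fin k) (Fin k) ℝ))‖ := by nth_rewrite 1 [hspec]; rfl
      _ ≤ ‖(hA.eigenvectorUnitary : Matrix (Fin k) (Fin k) ℝ) *
          Matrix.diagonal (RCLike.ofReal ∘ hA.eigenvalues)‖ *
          ‖(star (hA.eigenvectorUnitary : Matrix (Fin k) (Fin k) ℝ))‖ :=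
        Matrix.l2_opNorm_mul _ _
      _ ≤ ‖(hA.eigenvectorUnitary : Matrix (Fin k) (Fin k) ℝ)‖ *
          ‖Matrix.diagonal (RCLike.ofReal ∘ hA.eigenvalues)‖ *
          ‖(star (hA.eigenvectorUnitary : Matrix (Fin k) (Fin k) ℝ))‖ := by
        refine mul_le_mul_of_nonneg_right (Matrix.l2_opNorm_mul _ _) (norm_nonneg _)
      _ = ‖Matrix.diagonal hA.eigenvalues‖ := by rw [hnU, hnUs, hdiag]; ring
      _ ≤ |hA.eigenvalues i₀| := hd

lemma norm_eq_of_spectrum_eq {k : ℕ} (hk : 0 < k) {A B : Matrix (Fin k) (Fin k) ℝ}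
    (hA : A.IsHermitian) (hB : B.IsHermitian) (h : spectrum ℝ A = spectrum ℝ B) :
    ‖A‖ = ‖B‖ := by
  obtain ⟨μ, hμ, hμn⟩ := exists_abs_eigen_eq_norm hk hA
  obtain ⟨ν, hν, hνn⟩ := exists_abs_eigen_eq_norm hk hB
  refine le_antisymm ?_ ?_
  · rw [← hμn]; exact abs_le_norm_of_mem_spectrum (h ▸ hμ)
  · rw [← hνn]; exact abs_le_norm_of_mem_spectrum (h ▸ hν : ν ∈ spectrum ℝ A)

lemma spectrum_transfer {k : ℕ} (M : Matrix (Fin k) (Fin k) ℝ) (ν : ℝ)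
    (h : ν ∈ spectrum ℝ (M * Mᵀ)) : ν ∈ spectrum ℝ (Mᵀ * M) := by
  rw [matrix_mem_spectrum_iff] at h ⊢
  obtain ⟨v, hv, hMv⟩ := h
  by_cases hν : ν = 0
  · subst hν
    have hdet : (M * Mᵀ).det = 0 := by
      rw [← Matrix.exists_mulVec_eq_zero_iff]
      exact ⟨v, hv, by simpa using hMv⟩
    have hdetM : M.det = 0 := by
      rw [Matrix.det_mul, Matrix.det_transpose, mul_self_eq_zero] at hdet
      exact hdet
    have hdet2 : (Mᵀ * M).det = 0 := by
      rw [Matrix.det_mul, Matrix.det_transpose, hdetM, mul_zero]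
    obtain ⟨w, hw, hw0⟩ := (Matrix.exists_mulVec_eq_zero_iff).2 hdet2
    exact ⟨w, hw, by simpa using hw0⟩
  · refine ⟨Mᵀ *ᵥ v, ?_, ?_⟩
    · intro hc
      have h0 : (M * Mᵀ) *ᵥ v = 0 := by
        rw [← Matrix.mulVec_mulVec, hc, Matrix.mulVec_zero]
      rw [hMv] at h0
      rcases smul_eq_zero.1 h0 with h' | h'
      · exact hν h'
      · exact hv h'
    · rw [Matrix.mulVec_mulVec, Matrix.mul_assoc, ← Matrix.mulVec_mulVec, hMv,
        Matrix.mulVec_smul]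

lemma spec_one_sub_iff {k : ℕ} (B : Matrix (Fin k) (Fin k) ℝ) (μ : ℝ) :
    μ ∈ spectrum ℝ ((1 : Matrix (Fin k) (Fin k) ℝ) - B) ↔ (1 - μ) ∈ spectrum ℝ B := by
  rw [matrix_mem_spectrum_iff, matrix_mem_spectrum_iff]
  constructor
  · rintro ⟨v, hv, h⟩
    refine ⟨v, hv, ?_⟩
    rw [Matrix.sub_mulVec, Matrix.one_mulVec] at h
    rw [sub_smul, one_smul, ← h]
    abel
  · rintro ⟨v, hv, h⟩
    refine ⟨v, hv, ?_⟩
    rw [Matrix.sub_mulVec, Matrix.one_mulVec, h, sub_smul, one_smul]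
    abel

lemma herm_one_sub_self_mul {k : ℕ} (M : Matrix (Fin k) (Fin k) ℝ) :
    ((1 : Matrix (Fin k) (Fin k) ℝ) - M * Mᵀ).IsHermitian := by
  refine Matrix.IsHermitian.sub Matrix.isHermitian_one ?_
  rw [transpose_eq_conjTranspose]
  exact Matrix.isHermitian_mul_conjTranspose_self M

lemma norm_one_sub_comm {k : ℕ} (hk : 0 < k) (M : Matrix (Fin k) (Fin k) ℝ) :
    ‖(1 : Matrix (Fin k) (Fin k) ℝ) - M * Mᵀ‖ = ‖(1 : Matrix (Fin k) (Fin k) ℝ) - Mᵀ * M‖ := by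
  have h2 : ((1 : Matrix (Fin k) (Fin k) ℝ) - Mᵀ * M).IsHermitian := by
    have := herm_one_sub_self_mul Mᵀ
    rwa [Matrix.transpose_transpose] at this
  refine norm_eq_of_spectrum_eq hk (herm_one_sub_self_mul M) h2 ?_
  ext μ
  rw [spec_one_sub_iff, spec_one_sub_iff]
  constructor
  · exact spectrum_transfer M (1 - μ)
  · intro h
    have := spectrum_transfer Mᵀ (1 - μ) (by rwa [Matrix.transpose_transpose])
    rwa [Matrix.transpose_transpose] at this

lemma dot_mulVec_swap {m n : ℕ} (A : Matrix (Fin m) (Fin n) ℝ) (u : Fin m → ℝ) (v : Fin n → ℝ) :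
    u ⬝ᵥ (A *ᵥ v) = (Aᵀ *ᵥ u) ⬝ᵥ v := by
  rw [Matrix.dotProduct_mulVec, ← Matrix.mulVec_transpose]

lemma quad_lower {k : ℕ} (S : Matrix (Fin k) (Fin k) ℝ) (σ : ℝ)
    (hS : (S - σ • (1 : Matrix (Fin k) (Fin k) ℝ)).PosSemidef) (u : Fin k → ℝ)
    (hu : ‖ev u‖ = 1) : σ ≤ u ⬝ᵥ (S *ᵥ u) := by
  have h := hS.dotProduct_mulVec_nonneg u
  have hstar : star u = u := by simp
  rw [hstar, Matrix.sub_mulVec, Matrix.smul_mulVec, Matrix.one_mulVec,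
    dotProduct_sub, dotProduct_smul] at h
  have huu : u ⬝ᵥ u = 1 := by
    have := norm_ev_sq u
    rw [hu] at this; simpa using this.symm
  rw [huu] at h
  simpa using h

lemma selfdot_nonneg {m : ℕ} (v : Fin m → ℝ) : 0 ≤ v ⬝ᵥ v :=
  Finset.sum_nonneg fun i _ => mul_self_nonneg _

lemma sylvester_bound {k : ℕ} (hk : 0 < k) (S T H R : Matrix (Fin k) (Fin k) ℝ)
    (σ τ : ℝ) (hσ : 0 < σ) (hτ : 0 < τ)
    (hS : (S - σ • (1 : Matrix (Fin k) (Fin k) ℝ)).PosSemidef)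
    (hT : (T - τ • (1 : Matrix (Fin k) (Fin k) ℝ)).PosSemidef)
    (hR : S * H + H * T = R) : ‖H‖ ≤ ‖R‖ / (σ + τ) := by
  have hστ : 0 < σ + τ := by linarith
  rcases eq_or_lt_of_le (norm_nonneg H) with hH | hH
  · rw [← hH]; positivity
  set h : ℝ := ‖H‖ with hh
  have hBherm : (Hᵀ * H).IsHermitian := by
    rw [transpose_eq_conjTranspose]
    exact (Matrix.posSemidef_conjTranspose_mul_self H).1
  obtain ⟨μ, hμspec, hμabs⟩ := exists_abs_eigen_eq_norm hk hBherm
  obtain ⟨v, hv, hBv⟩ := (matrix_mem_spectrum_iff _ μ).1 hμspec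
  have hBnorm : ‖Hᵀ * H‖ = h ^ 2 := l2norm_transpose_mul_self H
  set c : ℝ := ‖ev v‖ with hc
  have hcpos : 0 < c := by
    rw [hc, norm_pos_iff]
    exact fun hcon => hv ((ev_zero_iff v).1 hcon)
  have hvv : v ⬝ᵥ v = c ^ 2 := (norm_ev_sq v).symm
  set w : Fin k → ℝ := H *ᵥ v with hw
  have hww : w ⬝ᵥ w = μ * c ^ 2 := by
    rw [hw, dot_mulVec_swap, Matrix.mulVec_mulVec, hBv]
    rw [dotProduct_comm, dotProduct_smul, hvv]
    simp [smul_eq_mul]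
  have hμnn : 0 ≤ μ := by
    have h1 : 0 ≤ w ⬝ᵥ w := selfdot_nonneg w
    rw [hww] at h1
    by_contra hcon
    push_neg at hcon
    have hc2 : 0 < c ^ 2 := pow_pos hcpos 2
    nlinarith
  have hμ : μ = h ^ 2 := by
    rw [← hμabs, abs_of_nonneg hμnn] at hBnorm
    exact hBnorm
  have hHtw : Hᵀ *ᵥ w = (h ^ 2) • v := by
    rw [hw, Matrix.mulVec_mulVec, hBv, hμ]
  have hnw : ‖ev w‖ = h * c := by
    have : ‖ev w‖ ^ 2 = (h * c) ^ 2 := by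
      rw [norm_ev_sq, hww, hμ]; ring
    have h1 : 0 ≤ ‖ev w‖ := norm_nonneg _
    have h2 : 0 ≤ h * c := by positivity
    nlinarith
  set u : Fin k → ℝ := (h * c)⁻¹ • w with hu
  have hhc : h * c ≠ 0 := by positivity
  have hwu : w = (h * c) • u := by
    rw [hu, smul_smul, mul_inv_cancel₀ hhc, one_smul]
  have hnu : ‖ev u‖ = 1 := by
    rw [hu, ev_smul, norm_smul, Real.norm_eq_abs, abs_inv, hnw, abs_of_pos (by positivity),
      inv_mul_cancel₀ hhc]
  set vu : Fin k → ℝ := c⁻¹ • v with hvu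
  have hnvu : ‖ev vu‖ = 1 := by
    rw [hvu, ev_smul, norm_smul, Real.norm_eq_abs, abs_inv, ← hc, abs_of_pos hcpos,
      inv_mul_cancel₀ (ne_of_gt hcpos)]
  have hHvu : H *ᵥ vu = h • u := by
    rw [hvu, Matrix.mulVec_smul, ← hw, hwu, smul_smul]
    congr 1
    field_simp
  have hHtu : Hᵀ *ᵥ u = h • vu := by
    rw [hu, Matrix.mulVec_smul, hHtw, smul_smul, hvu, smul_smul]
    congr 1
    field_simp
  -- main estimate
  have key : h * (σ + τ) ≤ u ⬝ᵥ (R *ᵥ vu) := by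
    rw [← hR, Matrix.add_mulVec, dotProduct_add]
    have t1 : h * σ ≤ u ⬝ᵥ ((S * H) *ᵥ vu) := by
      rw [← Matrix.mulVec_mulVec, hHvu, Matrix.mulVec_smul, dotProduct_smul, smul_eq_mul]
      have := quad_lower S σ hS u hnu
      nlinarith
    have t2 : h * τ ≤ u ⬝ᵥ ((H * T) *ᵥ vu) := by
      rw [← Matrix.mulVec_mulVec, dot_mulVec_swap, hHtu, smul_dotProduct, smul_eq_mul]
      have := quad_lower T τ hT vu hnvu
      nlinarith
    linarith
  have hub : u ⬝ᵥ (R *ᵥ vu) ≤ ‖R‖ := by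
    have := dot_mulVec_le R u vu
    rw [hnu, hnvu] at this
    simpa using this
  rw [le_div_iff₀ hστ]
  nlinarith

lemma completeness {n k : ℕ} (hkn : k ≤ n) (X : Matrix (Fin n) (Fin k) ℝ)
    (Xp : Matrix (Fin n) (Fin (n - k)) ℝ) (hX : Xᵀ * X = 1) (hXp : Xpᵀ * Xp = 1)
    (hXXp : Xᵀ * Xp = 0) : X * Xᵀ + Xp * Xpᵀ = 1 := by
  have e : Fin n ≃ Fin k ⊕ Fin (n - k) :=
    (finCongr (by omega : n = k + (n - k))).trans finSumFinEquiv.symm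
  have hXpX : Xpᵀ * X = 0 := by
    have := congrArg Matrix.transpose hXXp
    rwa [Matrix.transpose_mul, Matrix.transpose_transpose, Matrix.transpose_zero] at this
  have h1 : Matrix.fromRows Xᵀ Xpᵀ * Matrix.fromCols X Xp = 1 := by
    rw [Matrix.fromRows_mul_fromCols, hX, hXp, hXXp, hXpX, Matrix.fromBlocks_one]
  have h2 : Matrix.fromCols X Xp * Matrix.fromRows Xᵀ Xpᵀ = 1 :=
    (Matrix.fromCols_mul_fromRows_eq_one_comm e X Xp Xᵀ Xpᵀ).2 h1
  rwa [Matrix.fromCols_mul_fromRows] at h2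

lemma orth_norm_le_one {m l : ℕ} (A : Matrix (Fin m) (Fin l) ℝ) (hA : Aᵀ * A = 1) :
    ‖A‖ ≤ 1 := by
  rcases Nat.eq_zero_or_pos l with hl | hl
  · subst hl
    refine specNorm_le_bound A 1 zero_le_one fun v => ?_
    have hv : v = 0 := Subsingleton.elim v 0
    subst hv
    rw [Matrix.mulVec_zero]
    simp only [one_mul]
    exact le_trans (le_of_eq (by rw [show ev (0 : Fin m → ℝ) = 0 from rfl, norm_zero]))
      (norm_nonneg _)
  · haveI : Nonempty (Fin l) := ⟨⟨0, hl⟩⟩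
    have h1 : ‖Aᵀ * A‖ = ‖A‖ ^ 2 := l2norm_transpose_mul_self A
    rw [hA] at h1
    have hone : ‖(1 : Matrix (Fin l) (Fin l) ℝ)‖ = 1 := norm_one
    rw [hone] at h1
    nlinarith [norm_nonneg A]

/-- If XᵀD, X̃ᵀD are symmetric positive definite with XᵀD ⪰ σI,
X̃ᵀD ⪰ σ̃I (σ, σ̃ > 0), and X⊥ is an orthogonal completion of X, then
‖X − X̃‖₂ ≤ √2·(1 + 2‖D‖₂/(σ + σ̃))·‖X⊥ᵀX̃‖₂. -/
theorem full_rank_spec_bound {n k : ℕ} (hk : 1 ≤ k) (hkn : k ≤ n)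
    (D X Xt : Matrix (Fin n) (Fin k) ℝ)
    (Xp : Matrix (Fin n) (Fin (n - k)) ℝ)
    (hX : Xᵀ * X = 1) (hXt : Xtᵀ * Xt = 1)
    (hXp : Xpᵀ * Xp = 1) (hXXp : Xᵀ * Xp = 0)
    (hpd : (Xᵀ * D).PosDef) (hpdt : (Xtᵀ * D).PosDef)
    (sg sgt : ℝ) (hsg : 0 < sg) (hsgt : 0 < sgt)
    (h1 : (Xᵀ * D - sg • (1 : Matrix (Fin k) (Fin k) ℝ)).PosSemidef)
    (h2 : (Xtᵀ * D - sgt • (1 : Matrix (Fin k) (Fin k) ℝ)).PosSemidef) :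
    specNorm (X - Xt) ≤ Real.sqrt 2 * (1 + 2 * specNorm D / (sg + sgt)) *
      specNorm (Xpᵀ * Xt) := by
  have hkpos : 0 < k := hk
  simp only [specNorm_eq]
  set M : Matrix (Fin k) (Fin k) ℝ := Xᵀ * Xt with hM
  set H : Matrix (Fin k) (Fin k) ℝ := 1 - M with hH
  set G : Matrix (Fin (n - k)) (Fin k) ℝ := Xpᵀ * Xt with hG
  set s : ℝ := ‖G‖ with hs
  have hs0 : 0 ≤ s := norm_nonneg _
  have hcomp : X * Xᵀ + Xp * Xpᵀ = 1 := completeness hkn X Xp hX hXp hXXp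
  have hXpXp : Xp * Xpᵀ = 1 - X * Xᵀ := by rw [← hcomp]; abel
  have hXXT : X * Xᵀ = 1 - Xp * Xpᵀ := by rw [← hcomp]; abel
  have hSsym : (Xᵀ * D)ᵀ = Xᵀ * D := by
    have := hpd.1
    rwa [transpose_eq_conjTranspose]
  have hStsym : (Xtᵀ * D)ᵀ = Xtᵀ * D := by
    have := hpdt.1
    rwa [transpose_eq_conjTranspose]
  have hDtXt : Dᵀ * Xt = Xtᵀ * D := by
    rw [← hStsym, Matrix.transpose_mul, Matrix.transpose_transpose]
  have hDtX : Dᵀ * X = Xᵀ * D := by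
    rw [← hSsym, Matrix.transpose_mul, Matrix.transpose_transpose]
  -- decomposition
  have hdec : X - Xt = X * H - Xp * G := by
    rw [hH, hG, hM, Matrix.mul_sub, Matrix.mul_one, ← Matrix.mul_assoc, ← Matrix.mul_assoc,
      hXpXp, Matrix.sub_mul, Matrix.one_mul]
    abel
  -- Sylvester identity
  have hSM : (Xᵀ * D) * M = Xtᵀ * D - Dᵀ * (Xp * G) := by
    calc (Xᵀ * D) * M = (Dᵀ * X) * (Xᵀ * Xt) := by rw [hDtX, hM]
      _ = Dᵀ * ((X * Xᵀ) * Xt) := by rw [Matrix.mul_assoc, Matrix.mul_assoc]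
      _ = Dᵀ * ((1 - Xp * Xpᵀ) * Xt) := by rw [hXXT]
      _ = Dᵀ * Xt - Dᵀ * (Xp * (Xpᵀ * Xt)) := by
          rw [Matrix.sub_mul, Matrix.one_mul, Matrix.mul_sub, Matrix.mul_assoc]
      _ = Xtᵀ * D - Dᵀ * (Xp * G) := by rw [hDtXt, hG]
  have hMSt : M * (Xtᵀ * D) = Xᵀ * D - (Xᵀ - Xᵀ * (Xt * Xtᵀ)) * D := by
    rw [hM, Matrix.sub_mul, Matrix.mul_assoc, Matrix.mul_assoc, Matrix.mul_assoc]
    abel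
  have hsylv_id : (Xᵀ * D) * H + H * (Xtᵀ * D) =
      Dᵀ * (Xp * G) + (Xᵀ - Xᵀ * (Xt * Xtᵀ)) * D := by
    rw [hH, Matrix.mul_sub, Matrix.mul_one, Matrix.sub_mul, Matrix.one_mul, hSM, hMSt]
    abel
  -- norms
  have hXn : ‖X‖ ≤ 1 := orth_norm_le_one X hX
  have hXpn : ‖Xp‖ ≤ 1 := orth_norm_le_one Xp hXp
  have hDt : ‖Dᵀ‖ = ‖D‖ := l2norm_transpose D
  have hGG : Gᵀ * G = 1 - Mᵀ * M := by
    rw [hG, hM, Matrix.transpose_mul, Matrix.transpose_transpose, Matrix.transpose_mul,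
      Matrix.transpose_transpose]
    calc (Xtᵀ * Xp) * (Xpᵀ * Xt) = Xtᵀ * ((Xp * Xpᵀ) * Xt) := by
          rw [Matrix.mul_assoc, Matrix.mul_assoc]
      _ = Xtᵀ * ((1 - X * Xᵀ) * Xt) := by rw [hXpXp]
      _ = Xtᵀ * Xt - (Xtᵀ * X) * (Xᵀ * Xt) := by
          rw [Matrix.sub_mul, Matrix.one_mul, Matrix.mul_sub, Matrix.mul_assoc,
            Matrix.mul_assoc]
      _ = 1 - (Xtᵀ * X) * (Xᵀ * Xt) := by rw [hXt]
  have hA : (Xᵀ - Xᵀ * (Xt * Xtᵀ)) * (Xᵀ - Xᵀ * (Xt * Xtᵀ))ᵀ = 1 - M * Mᵀ := by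
    rw [Matrix.transpose_sub, Matrix.transpose_transpose, Matrix.transpose_mul,
      Matrix.transpose_transpose, Matrix.transpose_mul, Matrix.transpose_transpose]
    rw [Matrix.sub_mul, Matrix.mul_sub, Matrix.mul_sub, hX]
    rw [hM, Matrix.transpose_mul, Matrix.transpose_transpose]
    have e1 : Xᵀ * ((Xt * Xtᵀ) * X) = (Xᵀ * Xt) * (Xtᵀ * X) := by
      simp only [Matrix.mul_assoc]
    have e2 : (Xᵀ * (Xt * Xtᵀ)) * X = (Xᵀ * Xt) * (Xtᵀ * X) := by
      simp only [Matrix.mul_assoc]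
    have e3 : (Xᵀ * (Xt * Xtᵀ)) * ((Xt * Xtᵀ) * X) = (Xᵀ * Xt) * (Xtᵀ * X) := by
      simp only [Matrix.mul_assoc]
      rw [← Matrix.mul_assoc Xtᵀ Xt (Xtᵀ * X), hXt, Matrix.one_mul]
    rw [e1, e2, e3]
    abel
  have hAnorm : ‖Xᵀ - Xᵀ * (Xt * Xtᵀ)‖ = s := by
    have t1 := l2norm_transpose_mul_self (Xᵀ - Xᵀ * (Xt * Xtᵀ))ᵀ
    rw [Matrix.transpose_transpose, hA] at t1
    -- t1 : ‖1 - M*Mᵀ‖ = ‖(Xᵀ - Xᵀ*(Xt*Xtᵀ))ᵀ‖^2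
    have t2 : ‖(Xᵀ - Xᵀ * (Xt * Xtᵀ))ᵀ‖ = ‖Xᵀ - Xᵀ * (Xt * Xtᵀ)‖ := l2norm_transpose _
    rw [t2] at t1
    have hc2 : s ^ 2 = ‖1 - Mᵀ * M‖ := by
      rw [hs, ← l2norm_transpose_mul_self G, hGG]
    have hcomm := norm_one_sub_comm hkpos M
    have hsq : ‖Xᵀ - Xᵀ * (Xt * Xtᵀ)‖ ^ 2 = s ^ 2 := by rw [← t1, hcomm, hc2]
    nlinarith [norm_nonneg (Xᵀ - Xᵀ * (Xt * Xtᵀ)), hs0]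
  -- bound on R
  have hR1 : ‖Dᵀ * (Xp * G)‖ ≤ ‖D‖ * s := by
    calc ‖Dᵀ * (Xp * G)‖ ≤ ‖Dᵀ‖ * ‖Xp * G‖ := Matrix.l2_opNorm_mul _ _
      _ ≤ ‖Dᵀ‖ * (‖Xp‖ * ‖G‖) := by
          refine mul_le_mul_of_nonneg_left (Matrix.l2_opNorm_mul _ _) (norm_nonneg _)
      _ ≤ ‖D‖ * s := by
          rw [hDt]
          have hb : ‖Xp‖ * ‖G‖ ≤ s := by
            have := mul_le_mul_of_nonneg_right hXpn (norm_nonneg G)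
            rw [one_mul] at this
            rw [hs]
            exact this
          exact mul_le_mul_of_nonneg_left hb (norm_nonneg D)
  have hR2 : ‖(Xᵀ - Xᵀ * (Xt * Xtᵀ)) * D‖ ≤ s * ‖D‖ := by
    calc ‖(Xᵀ - Xᵀ * (Xt * Xtᵀ)) * D‖ ≤ ‖Xᵀ - Xᵀ * (Xt * Xtᵀ)‖ * ‖D‖ :=
          Matrix.l2_opNorm_mul _ _
      _ = s * ‖D‖ := by rw [hAnorm]
  have hRn : ‖Dᵀ * (Xp * G) + (Xᵀ - Xᵀ * (Xt * Xtᵀ)) * D‖ ≤ 2 * s * ‖D‖ := by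
    calc ‖Dᵀ * (Xp * G) + (Xᵀ - Xᵀ * (Xt * Xtᵀ)) * D‖ ≤
        ‖Dᵀ * (Xp * G)‖ + ‖(Xᵀ - Xᵀ * (Xt * Xtᵀ)) * D‖ := norm_add_le _ _
      _ ≤ ‖D‖ * s + s * ‖D‖ := add_le_add hR1 hR2
      _ = 2 * s * ‖D‖ := by ring
  have hστ : 0 < sg + sgt := by linarith
  have hsylv : ‖H‖ ≤ ‖Dᵀ * (Xp * G) + (Xᵀ - Xᵀ * (Xt * Xtᵀ)) * D‖ / (sg + sgt) :=
    sylvester_bound hkpos (Xᵀ * D) (Xtᵀ * D) H _ sg sgt hsg hsgt h1 h2 hsylv_id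
  have hHb : ‖H‖ ≤ 2 * s * ‖D‖ / (sg + sgt) := by
    refine le_trans hsylv ?_
    gcongr
  -- final assembly
  have hfr : ‖X - Xt‖ ≤ ‖H‖ + s := by
    rw [hdec]
    calc ‖X * H - Xp * G‖ ≤ ‖X * H‖ + ‖Xp * G‖ := norm_sub_le _ _
      _ ≤ ‖H‖ + s := by
          have b1 : ‖X * H‖ ≤ ‖X‖ * ‖H‖ := Matrix.l2_opNorm_mul _ _
          have b2 : ‖Xp * G‖ ≤ ‖Xp‖ * ‖G‖ := Matrix.l2_opNorm_mul _ _
          have b3 : ‖X‖ * ‖H‖ ≤ 1 * ‖H‖ := mul_le_mul_of_nonneg_right hXn (norm_nonneg _)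
          have b4 : ‖Xp‖ * ‖G‖ ≤ 1 * ‖G‖ := mul_le_mul_of_nonneg_right hXpn (norm_nonneg _)
          rw [← hs] at b4
          nlinarith
  have hsqrt : (1:ℝ) ≤ Real.sqrt 2 := by
    have h' : Real.sqrt 1 ≤ Real.sqrt 2 := Real.sqrt_le_sqrt (by norm_num)
    simpa using h'
  set q : ℝ := ‖D‖ / (sg + sgt) with hq
  have hq0 : 0 ≤ q := by positivity
  have hrw : 2 * s * ‖D‖ / (sg + sgt) = 2 * q * s := by rw [hq]; ring
  rw [hrw] at hHb
  have key : 0 ≤ (Real.sqrt 2 - 1) * ((1 + 2 * q) * s) :=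
    mul_nonneg (by linarith) (mul_nonneg (by linarith) hs0)
  have hfin : ‖X - Xt‖ ≤ Real.sqrt 2 * (1 + 2 * q) * s := by
    calc ‖X - Xt‖ ≤ ‖H‖ + s := hfr
      _ ≤ 2 * q * s + s := by linarith
      _ ≤ Real.sqrt 2 * (1 + 2 * q) * s := by nlinarith
  have heq : Real.sqrt 2 * (1 + 2 * q) * s = Real.sqrt 2 * (1 + 2 * ‖D‖ / (sg + sgt)) * s := by
    rw [hq]; ring
  linarith [heq.le, heq.ge]
end

section
/- Let n ≥ m ≥ 1, let B ∈ 𝕆^{n×m} (orthonormal columns), let A ∈ ℝ^{n×m}, and suppose BᵀA = W_opt·H is a polar decomposition, i.e., W_opt ∈ 𝕆^{m×m} is orthogonal and H is symmetric positive semidefinite. Then W_opt minimizes W ↦ ‖A − BW‖_F over 𝕆^{m×m}: for every orthogonal W ∈ 𝕆^{m×m}, ‖A − BW_opt‖_F ≤ ‖A − BW‖_F. -/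
open Matrix

lemma trace_orth_mul_psd_le {m : ℕ} (Q H : Matrix (Fin m) (Fin m) ℝ)
    (hQ : Qᵀ * Q = 1) (hH : H.PosSemidef) : (Q * H).trace ≤ H.trace := by
  open scoped MatrixOrder Matrix.Norms.L2Operator in
  set S := CFC.sqrt H with hSdef
  have hSsym : Sᵀ = S := by
    open scoped MatrixOrder Matrix.Norms.L2Operator in
    simpa using (CFC.sqrt_nonneg H).posSemidef.1.eq
  have hSS : S * S = H := by
    open scoped MatrixOrder Matrix.Norms.L2Operator in
    exact CFC.sqrt_mul_sqrt_self H hH.nonneg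
  have key : (S * Q * S).trace ≤ H.trace := by
    rw [← hSS]
    unfold Matrix.trace
    apply Finset.sum_le_sum
    intro i _
    -- diagonal entries
    set x : Fin m → ℝ := fun j => S i j with hx
    have hxS : ∀ k, S k i = x k := by
      intro k; rw [hx]; simp only
      have := congrFun (congrFun hSsym k) i
      simpa [Matrix.transpose_apply] using this.symm
    have hSQS : (S * Q * S).diag i = x ⬝ᵥ (Q *ᵥ x) := by
      simp only [Matrix.diag_apply, Matrix.mul_apply, dotProduct, Matrix.mulVec,
        dotProduct, Finset.sum_mul, Finset.mul_sum]
      rw [Finset.sum_comm]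
      apply Finset.sum_congr rfl; intro j _
      apply Finset.sum_congr rfl; intro k _
      rw [hxS k]; ring
    have hSSi : (S * S).diag i = x ⬝ᵥ x := by
      simp only [Matrix.diag_apply, Matrix.mul_apply, dotProduct]
      apply Finset.sum_congr rfl; intro k _
      rw [hxS k]
    set y : Fin m → ℝ := Q *ᵥ x with hy
    have hvy : y ᵥ* Q = x := by
      rw [← Matrix.mulVec_transpose, hy, Matrix.mulVec_mulVec, hQ, Matrix.one_mulVec]
    have hyy : y ⬝ᵥ y = x ⬝ᵥ x := by
      have h' : y ⬝ᵥ (Q *ᵥ x) = (y ᵥ* Q) ⬝ᵥ x := dotProduct_mulVec _ _ _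
      rw [← hy] at h'
      rw [h', hvy]
    have hxx : (0:ℝ) ≤ x ⬝ᵥ x :=
      Finset.sum_nonneg fun j _ => mul_self_nonneg (x j)
    have hCS : (x ⬝ᵥ y) ^ 2 ≤ (x ⬝ᵥ x) * (y ⬝ᵥ y) := by
      have := Finset.sum_mul_sq_le_sq_mul_sq Finset.univ x y
      simpa [dotProduct, pow_two, Finset.sum_mul, mul_comm, mul_assoc,
        mul_left_comm] using this
    have : x ⬝ᵥ y ≤ x ⬝ᵥ x := by
      rw [hyy] at hCS
      nlinarith [hCS, hxx]
    simp only [Matrix.diag_apply] at hSQS hSSi ⊢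
    rw [hSQS, hSSi]
    exact this
  calc (Q * H).trace = (Q * (S * S)).trace := by rw [hSS]
    _ = (S * Q * S).trace := by
        rw [show Q * (S * S) = (Q * S) * S from (Matrix.mul_assoc Q S S).symm,
          Matrix.trace_mul_comm, Matrix.mul_assoc]
    _ ≤ H.trace := key

/-- If BᵀA = W_opt·H is a polar decomposition (W_opt orthogonal, H ⪰ 0)
with B having orthonormal columns, then W_opt minimizes W ↦ ‖A − BW‖_F over
orthogonal matrices. -/
theorem polar_factor_minimizes {n m : ℕ} (hm : 1 ≤ m) (hmn : m ≤ n)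
    (B A : Matrix (Fin n) (Fin m) ℝ) (hB : Bᵀ * B = 1)
    (Wopt H : Matrix (Fin m) (Fin m) ℝ)
    (hWopt : Woptᵀ * Wopt = 1) (hH : H.PosSemidef)
    (hpolar : Bᵀ * A = Wopt * H) :
    ∀ W : Matrix (Fin m) (Fin m) ℝ, Wᵀ * W = 1 →
      frobNorm (A - B * Wopt) ≤ frobNorm (A - B * W) := by
  intro W hW
  unfold frobNorm
  apply Real.sqrt_le_sqrt
  -- expansion of trace((A - B*V)ᵀ(A - B*V)) for V orthogonal
  have expand : ∀ V : Matrix (Fin m) (Fin m) ℝ, Vᵀ * V = 1 →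
      ((A - B * V)ᵀ * (A - B * V)).trace
        = (Aᵀ * A).trace + (m : ℝ) - 2 * ((Vᵀ * (Wopt * H)).trace) := by
    intro V hV
    have h1 : (A - B * V)ᵀ * (A - B * V)
        = Aᵀ * A - Aᵀ * (B * V) - Vᵀ * (Bᵀ * A) + 1 := by
      rw [Matrix.transpose_sub, Matrix.sub_mul, Matrix.mul_sub, Matrix.mul_sub,
        Matrix.transpose_mul]
      have e1 : Vᵀ * Bᵀ * A = Vᵀ * (Bᵀ * A) := Matrix.mul_assoc _ _ _
      have e2 : Vᵀ * Bᵀ * (B * V) = 1 := by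
        rw [Matrix.mul_assoc, ← Matrix.mul_assoc Bᵀ B V, hB, Matrix.one_mul, hV]
      rw [e1, e2]
      abel
    have h2 : (Aᵀ * (B * V)).trace = (Vᵀ * (Bᵀ * A)).trace := by
      rw [← Matrix.trace_transpose (Aᵀ * (B * V))]
      congr 1
      rw [Matrix.transpose_mul, Matrix.transpose_mul, Matrix.transpose_transpose,
        Matrix.mul_assoc]
    rw [h1]
    simp only [Matrix.trace_add, Matrix.trace_sub, Matrix.trace_one, h2, hpolar]
    push_cast
    simp [Fintype.card_fin]
    ring
  rw [expand Wopt hWopt, expand W hW]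
  have hopt : (Woptᵀ * (Wopt * H)).trace = H.trace := by
    rw [← Matrix.mul_assoc, hWopt, Matrix.one_mul]
  have hle : ((Wᵀ * Wopt) * H).trace ≤ H.trace := by
    apply trace_orth_mul_psd_le _ _ _ hH
    have hWW : W * Wᵀ = 1 := mul_eq_one_comm.mp hW
    rw [Matrix.transpose_mul, Matrix.transpose_transpose, Matrix.mul_assoc,
      ← Matrix.mul_assoc W Wᵀ Wopt, ← Matrix.mul_assoc (Woptᵀ) _ _, hWW]
    rw [Matrix.mul_assoc, Matrix.one_mul, hWopt]
  rw [hopt]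
  have : (Wᵀ * (Wopt * H)).trace ≤ H.trace := by
    rw [← Matrix.mul_assoc]; exact hle
  linarith
end
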